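/- arXiv:1602.05023 — 6 statements merged into one kernel-verified Lean document; each statement's English description precedes it below -/
import Mathlib

section
/- Let μ and ν be Borel probability measures on ℝⁿ that are absolutely continuous with respect to Lebesgue measure with strictly positive densities. Then there exists a measurable lower triangular map T : ℝⁿ → ℝⁿ (the Knothe–Rosenblatt rearrangement) such that for every k and every fixed (x_1,…,x_{k−1}) the section x_k ↦ T^k(x_1,…,x_{k−1},x_k) is strictly increasing, and T pushes forward μ to ν, i.e., T♯μ = ν. -/
open MeasureTheory Set Filter Topology
open scoped ENNReal

namespace KRaux

/-- A nice measure on `ℝ`: finite, atomless, positive on proper intervals. -/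
structure NiceM (m : Measure ℝ) : Prop where
  fin : m univ ≠ ∞
  atom : ∀ t : ℝ, m {t} = 0
  pos : ∀ ⦃t u : ℝ⦄, t < u → 0 < m (Ioc t u)

/-- Normalized CDF, with values in `ℝ≥0∞`. -/
noncomputable def cdfE (m : Measure ℝ) (t : ℝ) : ℝ≥0∞ := m (Iic t) / m univ

/-- Quantile function. -/
noncomputable def qE (m : Measure ℝ) (p : ℝ≥0∞) : ℝ := sInf {u : ℝ | p ≤ cdfE m u}

variable {m : Measure ℝ}

theorem NiceM.c_pos (hm : NiceM m) : 0 < m univ :=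
  lt_of_lt_of_le (hm.pos zero_lt_one) (measure_mono (subset_univ _))

theorem NiceM.Iic_pos (hm : NiceM m) (t : ℝ) : 0 < m (Iic t) :=
  lt_of_lt_of_le (hm.pos (sub_one_lt t)) (measure_mono Ioc_subset_Iic_self)

theorem NiceM.Iic_ne_top (hm : NiceM m) (t : ℝ) : m (Iic t) ≠ ∞ :=
  ne_top_of_le_ne_top hm.fin (measure_mono (subset_univ _))

theorem NiceM.Iic_lt (hm : NiceM m) {t u : ℝ} (h : t < u) : m (Iic t) < m (Iic u) := by
  have h1 : m (Iic t) + m (Ioc t u) ≤ m (Iic u) := by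
    rw [← measure_union (Set.Iic_disjoint_Ioc le_rfl) measurableSet_Ioc,
      Set.Iic_union_Ioc_eq_Iic h.le]
  exact lt_of_lt_of_le (ENNReal.lt_add_right (hm.Iic_ne_top t) (hm.pos h).ne') h1

theorem cdfE_strictMono (hm : NiceM m) : StrictMono (cdfE m) := by
  intro t u h
  unfold cdfE
  rw [div_eq_mul_inv, div_eq_mul_inv]
  simpa only [mul_comm] using ENNReal.mul_lt_mul_right (ENNReal.inv_ne_zero.2 hm.fin)
    (ENNReal.inv_ne_top.2 hm.c_pos.ne') (hm.Iic_lt h)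

theorem cdfE_pos (hm : NiceM m) (t : ℝ) : 0 < cdfE m t :=
  ENNReal.div_pos (hm.Iic_pos t).ne' hm.fin

theorem cdfE_lt_one (hm : NiceM m) (t : ℝ) : cdfE m t < 1 := by
  have h1 : m (Iic t) < m univ := by
    have h2 : m (Iic t) + m (Ioc t (t + 1)) ≤ m univ := by
      rw [← measure_union (Set.Iic_disjoint_Ioc le_rfl) measurableSet_Ioc]
      exact measure_mono (subset_univ _)
    exact lt_of_lt_of_le (ENNReal.lt_add_right (hm.Iic_ne_top t) (hm.pos (lt_add_one t)).ne') h2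
  rw [cdfE, ENNReal.div_lt_iff (Or.inl hm.c_pos.ne') (Or.inl hm.fin), one_mul]
  exact h1

theorem cdfE_mem_Ioo (hm : NiceM m) (t : ℝ) : cdfE m t ∈ Ioo (0 : ℝ≥0∞) 1 :=
  ⟨cdfE_pos hm t, cdfE_lt_one hm t⟩

theorem tendsto_measure_Iic_atBot_zero (hm : NiceM m) :
    Tendsto (fun t => m (Iic t)) atBot (𝓝 0) := by
  have h := tendsto_measure_iInter_atBot (μ := m) (s := fun t : ℝ => Iic t)
    (fun t => measurableSet_Iic.nullMeasurableSet) (fun t u h => Iic_subset_Iic.2 h)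
    ⟨0, hm.Iic_ne_top 0⟩
  have h2 : ⋂ t : ℝ, Iic t = (∅ : Set ℝ) := by
    ext x
    simp only [mem_iInter, mem_Iic, mem_empty_iff_false, iff_false, not_forall, not_le]
    exact ⟨x - 1, sub_one_lt x⟩
  rw [h2] at h
  simpa [Function.comp_def] using h

theorem cdfE_tendsto_atBot (hm : NiceM m) : Tendsto (cdfE m) atBot (𝓝 0) := by
  have := ENNReal.Tendsto.mul_const (tendsto_measure_Iic_atBot_zero hm)
    (Or.inr (ENNReal.inv_ne_top.2 hm.c_pos.ne'))
  rw [zero_mul] at this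
  exact this.congr fun t => by rw [cdfE, div_eq_mul_inv]

theorem cdfE_tendsto_atTop (hm : NiceM m) : Tendsto (cdfE m) atTop (𝓝 1) := by
  have := ENNReal.Tendsto.mul_const (b := (m univ)⁻¹) (tendsto_measure_Iic_atTop m)
    (Or.inl hm.c_pos.ne')
  rw [ENNReal.mul_inv_cancel hm.c_pos.ne' hm.fin] at this
  exact this.congr fun t => by rw [cdfE, div_eq_mul_inv]

theorem tendsto_measure_Iic_left (hm : NiceM m) (t : ℝ) :
    Tendsto (fun s => m (Iic s)) (𝓝[<] t) (𝓝 (m (Iio t))) := by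
  refine tendsto_order.2 ⟨fun l hl => ?_, fun u hu => ?_⟩
  · have hU : ⋃ n : ℕ, Iic (t - 1 / (n + 1)) = Iio t := by
      ext x
      simp only [mem_iUnion, mem_Iic, mem_Iio]
      constructor
      · rintro ⟨n, hn⟩
        have : (0:ℝ) < 1 / (n + 1) := by positivity
        linarith
      · intro hx
        obtain ⟨n, hn⟩ := exists_nat_one_div_lt (sub_pos.2 hx)
        exact ⟨n, by linarith⟩
    have htend := tendsto_measure_iUnion_atTop (μ := m)
      (s := fun n : ℕ => Iic (t - 1 / (n + 1)))
      (fun i j hij => Iic_subset_Iic.2 (by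
        have : (1:ℝ) / (j + 1) ≤ 1 / (i + 1) := by
          apply one_div_le_one_div_of_le (by positivity)
          exact_mod_cast Nat.add_le_add_right hij 1
        linarith))
    rw [hU] at htend
    obtain ⟨n, hn⟩ := (htend.eventually_const_lt hl).exists
    filter_upwards [Ioo_mem_nhdsLT_of_mem
      (show t ∈ Ioc (t - 1 / (n+1)) t from ⟨sub_lt_self t (by positivity), le_rfl⟩)]
      with s hs
    exact lt_of_lt_of_le hn (measure_mono (Iic_subset_Iic.2 hs.1.le))
  · filter_upwards [self_mem_nhdsWithin] with s hs
    exact lt_of_le_of_lt (measure_mono (Iic_subset_Iio.2 hs)) hu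

theorem tendsto_measure_Iic_right (hm : NiceM m) (t : ℝ) :
    Tendsto (fun s => m (Iic s)) (𝓝[>] t) (𝓝 (m (Iic t))) := by
  refine tendsto_order.2 ⟨fun l hl => ?_, fun u hu => ?_⟩
  · filter_upwards [self_mem_nhdsWithin] with s hs
    exact lt_of_lt_of_le hl (measure_mono (Iic_subset_Iic.2 hs.le))
  · have hI : ⋂ n : ℕ, Iic (t + 1 / (n + 1)) = Iic t := by
      ext x
      simp only [mem_iInter, mem_Iic]
      constructor
      · intro h
        by_contra hx
        push_neg at hx
        obtain ⟨n, hn⟩ := exists_nat_one_div_lt (sub_pos.2 hx)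
        exact absurd (h n) (by linarith)
      · intro h n
        have : (0:ℝ) < 1 / (n + 1) := by positivity
        linarith
    have htend := tendsto_measure_iInter_atTop (μ := m)
      (s := fun n : ℕ => Iic (t + 1 / (n + 1)))
      (fun n => measurableSet_Iic.nullMeasurableSet)
      (fun i j hij => Iic_subset_Iic.2 (by
        have : (1:ℝ) / (j + 1) ≤ 1 / (i + 1) := by
          apply one_div_le_one_div_of_le (by positivity)
          exact_mod_cast Nat.add_le_add_right hij 1
        linarith)) ⟨0, hm.Iic_ne_top _⟩
    rw [hI] at htend
    obtain ⟨n, hn⟩ := (htend.eventually_lt_const hu).exists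
    filter_upwards [Ioo_mem_nhdsGT_of_mem
      (show t ∈ Ico t (t + 1 / (n + 1)) from ⟨le_rfl, lt_add_of_pos_right t (by positivity)⟩)]
      with s hs
    exact lt_of_le_of_lt (measure_mono (Iic_subset_Iic.2 hs.2.le)) hn

theorem continuous_measure_Iic (hm : NiceM m) : Continuous (fun t => m (Iic t)) := by
  rw [continuous_iff_continuousAt]
  intro t
  have hmono : Monotone (fun t : ℝ => m (Iic t)) := fun a b h =>
    measure_mono (Iic_subset_Iic.2 h)
  rw [hmono.continuousAt_iff_leftLim_eq_rightLim]
  have h1 : Function.leftLim (fun t : ℝ => m (Iic t)) t = m (Iio t) :=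
    leftLim_eq_of_tendsto
      (tendsto_measure_Iic_left hm t)
  have h2 : Function.rightLim (fun t : ℝ => m (Iic t)) t = m (Iic t) :=
    rightLim_eq_of_tendsto
      (tendsto_measure_Iic_right hm t)
  rw [h1, h2]
  exact measure_congr (Iio_ae_eq_Iic' (hm.atom t))

theorem continuous_cdfE (hm : NiceM m) : Continuous (cdfE m) := by
  unfold cdfE
  simp_rw [div_eq_mul_inv]
  rw [continuous_iff_continuousAt]
  intro t
  exact ENNReal.Tendsto.mul_const (continuous_measure_Iic hm).continuousAt
    (Or.inr (ENNReal.inv_ne_top.2 hm.c_pos.ne'))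

theorem cdfE_surj (hm : NiceM m) {p : ℝ≥0∞} (hp : p ∈ Ioo 0 1) : ∃ t, cdfE m t = p := by
  obtain ⟨a, ha⟩ := ((cdfE_tendsto_atBot hm).eventually_lt_const hp.1).exists
  obtain ⟨b, hb⟩ := ((cdfE_tendsto_atTop hm).eventually_const_lt hp.2).exists
  exact intermediate_value_univ a b (continuous_cdfE hm) ⟨ha.le, hb.le⟩

theorem cdfE_qE (hm : NiceM m) {p : ℝ≥0∞} (hp : p ∈ Ioo 0 1) : cdfE m (qE m p) = p := by
  obtain ⟨t₀, ht₀⟩ := cdfE_surj hm hp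
  have hset : {u : ℝ | p ≤ cdfE m u} = Ici t₀ := by
    ext u
    simp only [mem_setOf_eq, mem_Ici, ← ht₀, (cdfE_strictMono hm).le_iff_le]
  rw [qE, hset, csInf_Ici, ht₀]

theorem qE_le_iff (hm : NiceM m) {p : ℝ≥0∞} (hp : p ∈ Ioo 0 1) (u : ℝ) :
    qE m p ≤ u ↔ p ≤ cdfE m u := by
  obtain ⟨t₀, ht₀⟩ := cdfE_surj hm hp
  have hset : {u : ℝ | p ≤ cdfE m u} = Ici t₀ := by
    ext u
    simp only [mem_setOf_eq, mem_Ici, ← ht₀, (cdfE_strictMono hm).le_iff_le]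
  rw [qE, hset, csInf_Ici, ← (cdfE_strictMono hm).le_iff_le, ht₀]

theorem qE_lt_qE (hm : NiceM m) {p q : ℝ≥0∞} (hp : p ∈ Ioo 0 1) (hq : q ∈ Ioo 0 1)
    (hpq : p < q) : qE m p < qE m q := by
  by_contra h
  push_neg at h
  have := (cdfE_strictMono hm).monotone h
  rw [cdfE_qE hm hq, cdfE_qE hm hp] at this
  exact absurd this (not_le.2 hpq)

theorem measure_cdfE_le (hm : NiceM m) {p : ℝ≥0∞} (hp : p ∈ Ioo 0 1) :
    m {t | cdfE m t ≤ p} = p * m univ := by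
  have hq := cdfE_qE hm hp
  have hset : {t : ℝ | cdfE m t ≤ p} = Iic (qE m p) := by
    ext t
    constructor
    · intro h
      rw [mem_setOf_eq, ← hq] at h
      exact (cdfE_strictMono hm).le_iff_le.1 h
    · intro h
      rw [mem_setOf_eq, ← hq]
      exact (cdfE_strictMono hm).monotone h
  rw [hset]
  have : m (Iic (qE m p)) = cdfE m (qE m p) * m univ := by
    rw [cdfE, ENNReal.div_mul_cancel hm.c_pos.ne' hm.fin]
  rw [this, hq]

/-- `{t | cdfE m t ≤ p}` as an `Iic`. -/
theorem setOf_cdfE_le (hm : NiceM m) {p : ℝ≥0∞} (hp : p ∈ Ioo 0 1) :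
    {t | cdfE m t ≤ p} = Iic (qE m p) := by
  have hq := cdfE_qE hm hp
  ext t
  constructor
  · intro h
    rw [mem_setOf_eq, ← hq] at h
    exact (cdfE_strictMono hm).le_iff_le.1 h
  · intro h
    rw [mem_setOf_eq, ← hq]
    exact (cdfE_strictMono hm).monotone h

/-- The nice-measure structure for `volume.withDensity d`. -/
theorem niceM_withDensity {d : ℝ → ℝ≥0∞} (hd : Measurable d) (hpos : ∀ t, 0 < d t)
    (hfin : ∫⁻ t, d t ≠ ∞) : NiceM (volume.withDensity d) := by
  constructor
  · rw [withDensity_apply d MeasurableSet.univ, setLIntegral_univ]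
    exact hfin
  · intro t
    rw [withDensity_apply d (measurableSet_singleton t)]
    exact setLIntegral_measure_zero _ _ (Real.volume_singleton)
  · intro t u h
    rw [withDensity_apply d measurableSet_Ioc]
    rw [show ∫⁻ s in Ioc t u, d s = ∫⁻ s, d s ∂(volume.restrict (Ioc t u)) from rfl,
      lintegral_pos_iff_support hd]
    have hsupp : Function.support d = univ := by
      ext s; simp [Function.mem_support, (hpos s).ne']
    rw [hsupp, Measure.restrict_apply_univ, Real.volume_Ioc]
    exact ENNReal.ofReal_pos.2 (sub_pos.2 h)

end KRaux

namespace KRaux2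
open KRaux

variable {α : Type*} [MeasurableSpace α]

/-- Measurability of `b ↦ (volume.withDensity fun t => G (t, b)) v`. -/
theorem measurable_fiber_measure {G : ℝ × α → ℝ≥0∞} (hG : Measurable G)
    {v : Set ℝ} (hv : MeasurableSet v) :
    Measurable fun b => (volume.withDensity fun t => G (t, b)) v := by
  have h1 : ∀ b, (volume.withDensity fun t => G (t, b)) v
      = ∫⁻ t, ({q : α × ℝ | q.2 ∈ v}.indicator (fun q => G (q.2, q.1))) (b, t) := by
    intro b
    rw [withDensity_apply _ hv, ← lintegral_indicator hv]
    congr 1 with t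
  simp_rw [h1]
  apply Measurable.lintegral_prod_right'
  exact (hG.comp (measurable_snd.prodMk measurable_fst)).indicator
    (measurable_snd hv)

/-- Joint measurability of the fiberwise CDF numerator. -/
theorem measurable_cdf_num {F : ℝ × α → ℝ≥0∞} (hF : Measurable F) :
    Measurable fun p : ℝ × α => (volume.withDensity fun t => F (t, p.2)) (Set.Iic p.1) := by
  have h1 : ∀ p : ℝ × α, (volume.withDensity fun t => F (t, p.2)) (Set.Iic p.1)
      = ∫⁻ s, ({q : (ℝ × α) × ℝ | q.2 ≤ q.1.1}.indicator (fun q => F (q.2, q.1.2))) (p, s) := by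
    intro p
    rw [withDensity_apply _ measurableSet_Iic, ← lintegral_indicator measurableSet_Iic]
    congr 1 with s
  simp_rw [h1]
  apply Measurable.lintegral_prod_right'
  exact (hF.comp (measurable_snd.prodMk measurable_fst.snd)).indicator
    (measurableSet_le measurable_snd measurable_fst.fst)

theorem step_core (μα : Measure α) [SigmaFinite μα]
    (F G : ℝ × α → ℝ≥0∞) (hFm : Measurable F) (hGm : Measurable G)
    (hFpos : ∀ p, 0 < F p) (hGpos : ∀ p, 0 < G p)
    (hFfin : ∫⁻ a, (∫⁻ t, F (t, a)) ∂μα ≠ ∞)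
    (hGfin : ∫⁻ b, (∫⁻ t, G (t, b)) ∂μα ≠ ∞)
    (T0 : α → α) (hT0 : Measurable T0)
    (hmap : Measure.map T0 (μα.withDensity (fun a => ∫⁻ t, F (t, a)))
      = μα.withDensity (fun b => ∫⁻ t, G (t, b))) :
    ∃ S : α → ℝ → ℝ,
      Measurable (fun p : ℝ × α => S p.2 p.1) ∧ (∀ a, StrictMono (S a)) ∧
      Measure.map (fun p : ℝ × α => (S p.2 p.1, T0 p.2)) ((volume.prod μα).withDensity F)
        = (volume.prod μα).withDensity G := by
  classical
  set f1 : α → ℝ≥0∞ := fun a => ∫⁻ t, F (t, a) with hf1def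
  set g1 : α → ℝ≥0∞ := fun b => ∫⁻ t, G (t, b) with hg1def
  set mF : α → Measure ℝ := fun a => volume.withDensity fun t => F (t, a) with hmFdef
  set mG : α → Measure ℝ := fun b => volume.withDensity fun t => G (t, b) with hmGdef
  have hFm1 : Measurable f1 := by
    apply Measurable.lintegral_prod_right' (f := fun q : α × ℝ => F (q.2, q.1))
    exact hFm.comp (measurable_snd.prodMk measurable_fst)
  have hGm1 : Measurable g1 := by
    apply Measurable.lintegral_prod_right' (f := fun q : α × ℝ => G (q.2, q.1))
    exact hGm.comp (measurable_snd.prodMk measurable_fst)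
  have hmFuniv : ∀ a, mF a Set.univ = f1 a := by
    intro a; rw [hmFdef]; rw [withDensity_apply _ MeasurableSet.univ, setLIntegral_univ]
  have hmGuniv : ∀ b, mG b Set.univ = g1 b := by
    intro b; rw [hmGdef]; rw [withDensity_apply _ MeasurableSet.univ, setLIntegral_univ]
  have hf1pos : ∀ a, 0 < f1 a := by
    intro a
    have hd : Measurable fun t : ℝ => F (t, a) := hFm.comp (measurable_id.prodMk measurable_const)
    show 0 < ∫⁻ t, F (t, a)
    rw [lintegral_pos_iff_support hd]
    have hsupp : (Function.support fun t => F (t, a)) = Set.univ := by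
      ext t; simp [Function.mem_support, (hFpos (t, a)).ne']
    rw [hsupp]
    simp
  have hg1pos : ∀ b, 0 < g1 b := by
    intro b
    have hd : Measurable fun t : ℝ => G (t, b) := hGm.comp (measurable_id.prodMk measurable_const)
    show 0 < ∫⁻ t, G (t, b)
    rw [lintegral_pos_iff_support hd]
    have hsupp : (Function.support fun t => G (t, b)) = Set.univ := by
      ext t; simp [Function.mem_support, (hGpos (t, b)).ne']
    rw [hsupp]
    simp
  have hniceF : ∀ a, f1 a ≠ ∞ → NiceM (mF a) := fun a ha =>
    niceM_withDensity (hFm.comp (measurable_id.prodMk measurable_const))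
      (fun t => hFpos _) ha
  have hniceG : ∀ b, g1 b ≠ ∞ → NiceM (mG b) := fun b hb =>
    niceM_withDensity (hGm.comp (measurable_id.prodMk measurable_const))
      (fun t => hGpos _) hb
  set S : α → ℝ → ℝ := fun a t =>
    if f1 a ≠ ∞ ∧ g1 (T0 a) ≠ ∞ then qE (mG (T0 a)) (cdfE (mF a) t) else t with hSdef
  have hkey : ∀ a, f1 a ≠ ∞ → g1 (T0 a) ≠ ∞ → ∀ t u : ℝ,
      (S a t ≤ u ↔ cdfE (mF a) t ≤ cdfE (mG (T0 a)) u) := by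
    intro a ha hb t u
    rw [hSdef]
    simp only [if_pos (And.intro ha hb)]
    exact qE_le_iff (hniceG _ hb) (cdfE_mem_Ioo (hniceF a ha) t) u
  have hSmono : ∀ a, StrictMono (S a) := by
    intro a t u htu
    by_cases h : f1 a ≠ ∞ ∧ g1 (T0 a) ≠ ∞
    · simp only [hSdef, if_pos h]
      exact qE_lt_qE (hniceG _ h.2) (cdfE_mem_Ioo (hniceF a h.1) t)
        (cdfE_mem_Ioo (hniceF a h.1) u) (cdfE_strictMono (hniceF a h.1) htu)
    · simp only [hSdef, if_neg h]
      exact htu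
  have hcdfF : Measurable fun p : ℝ × α => cdfE (mF p.2) p.1 := by
    have h1 : ∀ p : ℝ × α, cdfE (mF p.2) p.1 = mF p.2 (Set.Iic p.1) / f1 p.2 := by
      intro p; rw [cdfE, hmFuniv]
    simp_rw [h1]
    exact (measurable_cdf_num hFm).div (hFm1.comp measurable_snd)
  have hcdfGu : ∀ u : ℝ, Measurable fun b => cdfE (mG b) u := by
    intro u
    have h1 : ∀ b, cdfE (mG b) u = mG b (Set.Iic u) / g1 b := by
      intro b; rw [cdfE, hmGuniv]
    simp_rw [h1]
    exact (measurable_fiber_measure hGm measurableSet_Iic).div hGm1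
  have hgood : MeasurableSet {p : ℝ × α | f1 p.2 ≠ ∞ ∧ g1 (T0 p.2) ≠ ∞} := by
    refine MeasurableSet.inter ?_ ?_
    · exact ((hFm1.comp measurable_snd) (measurableSet_singleton ∞)).compl
    · exact (((hGm1.comp hT0).comp measurable_snd) (measurableSet_singleton ∞)).compl
  have hSmeas : Measurable fun p : ℝ × α => S p.2 p.1 := by
    apply measurable_of_Iic
    intro u
    have hpre : (fun p : ℝ × α => S p.2 p.1) ⁻¹' (Set.Iic u)
        = ({p : ℝ × α | f1 p.2 ≠ ∞ ∧ g1 (T0 p.2) ≠ ∞} ∩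
            {p : ℝ × α | cdfE (mF p.2) p.1 ≤ cdfE (mG (T0 p.2)) u}) ∪
          ({p : ℝ × α | f1 p.2 ≠ ∞ ∧ g1 (T0 p.2) ≠ ∞}ᶜ ∩ {p : ℝ × α | p.1 ≤ u}) := by
      ext ⟨t, a⟩
      simp only [Set.mem_preimage, Set.mem_Iic, Set.mem_union, Set.mem_inter_iff,
        Set.mem_setOf_eq, Set.mem_compl_iff]
      by_cases h : f1 a ≠ ∞ ∧ g1 (T0 a) ≠ ∞
      · constructor
        · intro hh
          exact Or.inl ⟨h, (hkey a h.1 h.2 t u).1 hh⟩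
        · rintro (⟨-, hP⟩ | ⟨hbad, -⟩)
          · exact (hkey a h.1 h.2 t u).2 hP
          · exact absurd h hbad
      · constructor
        · intro hh
          refine Or.inr ⟨h, ?_⟩
          rw [hSdef] at hh
          simpa [if_neg h] using hh
        · rintro (⟨hg, -⟩ | ⟨-, hP⟩)
          · exact absurd hg h
          · rw [hSdef]
            simpa [if_neg h] using hP
    rw [hpre]
    exact (hgood.inter (measurableSet_le hcdfF
      ((hcdfGu u).comp (hT0.comp measurable_snd)))).union
      (hgood.compl.inter (measurable_fst measurableSet_Iic))
  have hfiber : ∀ a, f1 a ≠ ∞ → g1 (T0 a) ≠ ∞ →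
      Measure.map (S a) (mF a) = (f1 a * (g1 (T0 a))⁻¹) • mG (T0 a) := by
    intro a ha hb
    have hSa : Measurable (S a) := (hSmono a).monotone.measurable
    haveI h1 : IsFiniteMeasure (Measure.map (S a) (mF a)) := by
      constructor
      rw [Measure.map_apply hSa MeasurableSet.univ, Set.preimage_univ, hmFuniv]
      exact lt_top_iff_ne_top.2 ha
    refine ext_of_generate_finite (Set.range Set.Iic)
      (BorelSpace.measurable_eq.trans (borel_eq_generateFrom_Iic ℝ)) isPiSystem_Iic ?_ ?_
    · rintro s ⟨u, rfl⟩
      rw [Measure.map_apply hSa measurableSet_Iic]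
      have hset : S a ⁻¹' Set.Iic u = {t | cdfE (mF a) t ≤ cdfE (mG (T0 a)) u} := by
        ext t
        exact hkey a ha hb t u
      rw [hset, measure_cdfE_le (hniceF a ha) (cdfE_mem_Ioo (hniceG _ hb) u), hmFuniv,
        Measure.smul_apply, smul_eq_mul, cdfE, hmGuniv, div_eq_mul_inv]
      ring
    · rw [Measure.map_apply hSa MeasurableSet.univ, Set.preimage_univ, hmFuniv,
        Measure.smul_apply, smul_eq_mul, hmGuniv, mul_assoc,
        ENNReal.inv_mul_cancel (hg1pos _).ne' hb, mul_one]
  -- null sets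
  have hnullf : μα {a | f1 a = ∞} = 0 := by
    have h := ae_lt_top hFm1 hFfin
    rw [ae_iff] at h
    simpa [not_lt, top_le_iff] using h
  have hnullgset : MeasurableSet {b : α | g1 b = ∞} := hGm1 (measurableSet_singleton ∞)
  have hwdnull : ∀ s : Set α, MeasurableSet s → μα.withDensity f1 s = 0 → μα s = 0 := by
    intro s hs h3
    rw [withDensity_apply _ hs] at h3
    have h4 : f1 =ᵐ[μα.restrict s] 0 := (lintegral_eq_zero_iff hFm1).1 h3
    have h5 := ae_iff.1 h4
    simp only [Pi.zero_apply] at h5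
    have h6 : {a | ¬ f1 a = (0:ℝ≥0∞)} = Set.univ := by
      ext a; simp [(hf1pos a).ne']
    rw [h6, Measure.restrict_apply_univ] at h5
    exact h5
  have hnullg : μα (T0 ⁻¹' {b | g1 b = ∞}) = 0 := by
    have hg0 : μα {b | g1 b = ∞} = 0 := by
      have h := ae_lt_top hGm1 hGfin
      rw [ae_iff] at h
      simpa [not_lt, top_le_iff] using h
    have h2 : (μα.withDensity g1) {b | g1 b = ∞} = 0 := by
      rw [withDensity_apply _ hnullgset]
      exact setLIntegral_measure_zero _ _ hg0
    have h3 : (μα.withDensity f1) (T0 ⁻¹' {b | g1 b = ∞}) = 0 := by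
      rw [← Measure.map_apply hT0 hnullgset, hmap]
      exact h2
    exact hwdnull _ (hT0 hnullgset) h3
  have hae : ∀ᵐ a ∂μα, f1 a ≠ ∞ ∧ g1 (T0 a) ≠ ∞ := by
    rw [ae_iff]
    have : {a | ¬(f1 a ≠ ∞ ∧ g1 (T0 a) ≠ ∞)} ⊆ {a | f1 a = ∞} ∪ T0 ⁻¹' {b | g1 b = ∞} := by
      intro a haa
      simp only [Set.mem_setOf_eq, not_and_or, not_not] at haa
      rcases haa with h | h
      · exact Or.inl h
      · exact Or.inr h
    exact measure_mono_null this (le_antisymm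
      ((measure_union_le _ _).trans (by rw [hnullf, hnullg, add_zero])) (zero_le))
  -- masses
  have hmass : ∫⁻ a, f1 a ∂μα = ∫⁻ b, g1 b ∂μα := by
    have h := congrArg (fun m : Measure α => m Set.univ) hmap
    simpa [Measure.map_apply hT0 MeasurableSet.univ,
      withDensity_apply _ MeasurableSet.univ, setLIntegral_univ] using h
  refine ⟨S, hSmeas, hSmono, ?_⟩
  have hΘ : Measurable fun p : ℝ × α => (S p.2 p.1, T0 p.2) :=
    hSmeas.prodMk (hT0.comp measurable_snd)
  have hPft : ∫⁻ p, F p ∂(volume.prod μα) ≠ ∞ := by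
    rw [lintegral_prod_symm F hFm.aemeasurable]
    exact hFfin
  haveI : IsFiniteMeasure ((volume.prod μα).withDensity F) := isFiniteMeasure_withDensity hPft
  haveI : IsFiniteMeasure (Measure.map (fun p : ℝ × α => (S p.2 p.1, T0 p.2))
      ((volume.prod μα).withDensity F)) := by
    constructor
    rw [Measure.map_apply hΘ MeasurableSet.univ, Set.preimage_univ]
    exact measure_lt_top _ _
  -- the common value of both sides on a rectangle
  have hRHS : ∀ (v : Set ℝ) (w : Set α), MeasurableSet v → MeasurableSet w →
      ((volume.prod μα).withDensity G) (v ×ˢ w) = ∫⁻ b in w, mG b v ∂μα := by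
    intro v w hv hw
    rw [withDensity_apply _ (hv.prod hw), ← lintegral_indicator (hv.prod hw),
      lintegral_prod_symm _ ((hGm.indicator (hv.prod hw)).aemeasurable)]
    have hin : ∀ b, (∫⁻ t, ((v ×ˢ w).indicator G) (t, b) ∂volume)
        = Set.indicator w (fun b' => mG b' v) b := by
      intro b
      by_cases hbw : b ∈ w
      · rw [Set.indicator_of_mem hbw]
        have : ∀ t, ((v ×ˢ w).indicator G) (t, b) = Set.indicator v (fun t => G (t, b)) t := by
          intro t
          by_cases htv : t ∈ v
          · rw [Set.indicator_of_mem htv, Set.indicator_of_mem (Set.mk_mem_prod htv hbw)]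
          · rw [Set.indicator_of_notMem htv,
              Set.indicator_of_notMem (fun hc => htv hc.1)]
        simp_rw [this]
        rw [lintegral_indicator hv, hmGdef, withDensity_apply _ hv]
      · rw [Set.indicator_of_notMem hbw]
        have : ∀ t, ((v ×ˢ w).indicator G) (t, b) = 0 := by
          intro t
          exact Set.indicator_of_notMem (fun hc => hbw hc.2) _
        simp_rw [this]
        exact lintegral_zero
    simp_rw [hin]
    rw [lintegral_indicator hw]
  have hLHS : ∀ (v : Set ℝ) (w : Set α), MeasurableSet v → MeasurableSet w →
      (Measure.map (fun p : ℝ × α => (S p.2 p.1, T0 p.2))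
        ((volume.prod μα).withDensity F)) (v ×ˢ w) = ∫⁻ b in w, mG b v ∂μα := by
    intro v w hv hw
    have hpre : MeasurableSet ((fun p : ℝ × α => (S p.2 p.1, T0 p.2)) ⁻¹' (v ×ˢ w)) :=
      hΘ (hv.prod hw)
    rw [Measure.map_apply hΘ (hv.prod hw), withDensity_apply _ hpre,
      ← lintegral_indicator hpre,
      lintegral_prod_symm _ ((hFm.indicator hpre).aemeasurable)]
    have hin : ∀ a, f1 a ≠ ∞ → g1 (T0 a) ≠ ∞ →
        (∫⁻ t, (((fun p : ℝ × α => (S p.2 p.1, T0 p.2)) ⁻¹' (v ×ˢ w)).indicator F) (t, a) ∂volume)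
        = Set.indicator (T0 ⁻¹' w) (fun a' => f1 a' * ((g1 (T0 a'))⁻¹ * mG (T0 a') v)) a := by
      intro a ha hb
      have hSa : Measurable (S a) := (hSmono a).monotone.measurable
      by_cases haw : T0 a ∈ w
      · rw [Set.indicator_of_mem (show a ∈ T0 ⁻¹' w from haw)]
        have heq : ∀ t, (((fun p : ℝ × α => (S p.2 p.1, T0 p.2)) ⁻¹' (v ×ˢ w)).indicator F) (t, a)
            = Set.indicator (S a ⁻¹' v) (fun t => F (t, a)) t := by
          intro t
          by_cases htv : S a t ∈ v
          · rw [Set.indicator_of_mem (show t ∈ S a ⁻¹' v from htv),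
              Set.indicator_of_mem (show (t, a) ∈
                (fun p : ℝ × α => (S p.2 p.1, T0 p.2)) ⁻¹' (v ×ˢ w) from
                Set.mk_mem_prod htv haw)]
          · rw [Set.indicator_of_notMem (show t ∉ S a ⁻¹' v from htv),
              Set.indicator_of_notMem (show (t, a) ∉
                (fun p : ℝ × α => (S p.2 p.1, T0 p.2)) ⁻¹' (v ×ˢ w) from
                fun hc => htv hc.1)]
        simp_rw [heq]
        rw [lintegral_indicator (hSa hv)]
        have : (∫⁻ t in S a ⁻¹' v, F (t, a) ∂volume) = mF a (S a ⁻¹' v) := by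
          rw [hmFdef, withDensity_apply _ (hSa hv)]
        rw [this, ← Measure.map_apply hSa hv, hfiber a ha hb, Measure.smul_apply, smul_eq_mul,
          mul_assoc]
      · rw [Set.indicator_of_notMem (show a ∉ T0 ⁻¹' w from haw)]
        have heq : ∀ t, (((fun p : ℝ × α => (S p.2 p.1, T0 p.2)) ⁻¹' (v ×ˢ w)).indicator F)
            (t, a) = 0 := by
          intro t
          exact Set.indicator_of_notMem (fun hc => haw hc.2) _
        simp_rw [heq]
        exact lintegral_zero
    have hcong : (fun a => ∫⁻ t,
          (((fun p : ℝ × α => (S p.2 p.1, T0 p.2)) ⁻¹' (v ×ˢ w)).indicator F) (t, a) ∂volume)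
        =ᵐ[μα] fun a => Set.indicator (T0 ⁻¹' w)
          (fun a' => f1 a' * ((g1 (T0 a'))⁻¹ * mG (T0 a') v)) a := by
      filter_upwards [hae] with a haa
      exact hin a haa.1 haa.2
    rw [lintegral_congr_ae hcong, lintegral_indicator (hT0 hw)]
    have hmeasb : Measurable fun b => (g1 b)⁻¹ * mG b v := by
      apply Measurable.mul
      · exact hGm1.inv
      · exact measurable_fiber_measure hGm hv
    calc ∫⁻ a in T0 ⁻¹' w, f1 a * ((g1 (T0 a))⁻¹ * mG (T0 a) v) ∂μα
        = ∫⁻ a in T0 ⁻¹' w, (f1 * ((fun b => (g1 b)⁻¹ * mG b v) ∘ T0)) a ∂μα := by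
          apply lintegral_congr
          intro a
          simp [Function.comp]
      _ = ∫⁻ a in T0 ⁻¹' w, ((fun b => (g1 b)⁻¹ * mG b v) ∘ T0) a ∂(μα.withDensity f1) :=
          (setLIntegral_withDensity_eq_setLIntegral_mul μα hFm1 (hmeasb.comp hT0)
            (hT0 hw)).symm
      _ = ∫⁻ b in w, (g1 b)⁻¹ * mG b v ∂(Measure.map T0 (μα.withDensity f1)) :=
          (setLIntegral_map hw hmeasb hT0).symm
      _ = ∫⁻ b in w, (g1 b)⁻¹ * mG b v ∂(μα.withDensity g1) := by rw [hmap]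
      _ = ∫⁻ b in w, (g1 * fun b => (g1 b)⁻¹ * mG b v) b ∂μα :=
          setLIntegral_withDensity_eq_setLIntegral_mul μα hGm1 hmeasb hw
      _ = ∫⁻ b in w, mG b v ∂μα := by
          apply lintegral_congr_ae
          apply ae_restrict_of_ae
          filter_upwards [ae_lt_top hGm1 hGfin] with b hbfin
          simp only [Pi.mul_apply]
          rw [← mul_assoc, ENNReal.mul_inv_cancel (hg1pos b).ne' hbfin.ne, one_mul]
  apply ext_of_generate_finite _ generateFrom_prod.symm isPiSystem_prod
  · rintro s ⟨v, hv, w, hw, rfl⟩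
    rw [hLHS v w hv hw, hRHS v w hv hw]
  · have h1 := hLHS Set.univ Set.univ MeasurableSet.univ MeasurableSet.univ
    have h2 := hRHS Set.univ Set.univ MeasurableSet.univ MeasurableSet.univ
    rw [Set.univ_prod_univ] at h1 h2
    rw [h1, h2]
/-- Pushing forward a `withDensity` measure through a measurable equivalence. -/
theorem map_equiv_withDensity {β γ : Type*} [MeasurableSpace β] [MeasurableSpace γ]
    (e : β ≃ᵐ γ) (μ : Measure β) {h : γ → ℝ≥0∞} (hh : Measurable h) :
    Measure.map e (μ.withDensity fun x => h (e x)) = (Measure.map e μ).withDensity h := by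
  ext s hs
  rw [Measure.map_apply e.measurable hs, withDensity_apply _ (e.measurable hs),
    withDensity_apply _ hs, setLIntegral_map hs hh e.measurable]

end KRaux2


/-- A map `T : ℝⁿ → ℝⁿ` is lower triangular if its `k`-th component depends
only on the first `k` input variables. -/
def LowerTriangular {n : ℕ} (T : (Fin n → ℝ) → (Fin n → ℝ)) : Prop :=
  ∀ k : Fin n, ∀ x y : Fin n → ℝ, (∀ i ≤ k, x i = y i) → T x k = T y k

namespace KRaux3
open KRaux KRaux2 Set

theorem KR : ∀ (n : ℕ) (f g : (Fin n → ℝ) → ℝ≥0∞), Measurable f → Measurable g →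
    (∀ x, 0 < f x) → (∀ x, 0 < g x) →
    (∫⁻ x, f x = 1) → (∫⁻ x, g x = 1) →
    ∃ T : (Fin n → ℝ) → (Fin n → ℝ), Measurable T ∧ LowerTriangular T ∧
      (∀ (k : Fin n) (x : Fin n → ℝ),
        StrictMono (fun t : ℝ => T (Function.update x k t) k)) ∧
      Measure.map T (volume.withDensity f) = volume.withDensity g := by
  intro n
  induction n with
  | zero =>
    intro f g hf hg hfpos hgpos hfint hgint
    refine ⟨id, measurable_id, fun k => k.elim0, fun k => k.elim0, ?_⟩
    rw [Measure.map_id]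
    ext s hs
    rcases Set.eq_empty_or_nonempty s with rfl | hne
    · simp
    · have hsuniv : s = Set.univ := by
        apply Set.eq_univ_of_forall
        intro y
        obtain ⟨z, hz⟩ := hne
        exact Subsingleton.elim z y ▸ hz
      subst hsuniv
      rw [withDensity_apply _ MeasurableSet.univ, withDensity_apply _ MeasurableSet.univ,
        setLIntegral_univ, setLIntegral_univ, hfint, hgint]
  | succ n IH =>
    intro f g hf hg hfpos hgpos hfint hgint
    set e := MeasurableEquiv.piFinSuccAbove (fun _ : Fin (n+1) => ℝ) (Fin.last n) with hedef
    have hepres : MeasurePreserving e volume volume :=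
      volume_preserving_piFinSuccAbove (fun _ : Fin (n+1) => ℝ) (Fin.last n)
    set F : ℝ × (Fin n → ℝ) → ℝ≥0∞ := fun p => f (e.symm p) with hFdef
    set G : ℝ × (Fin n → ℝ) → ℝ≥0∞ := fun p => g (e.symm p) with hGdef
    have hFm : Measurable F := hf.comp e.symm.measurable
    have hGm : Measurable G := hg.comp e.symm.measurable
    have hFcomp : ∀ x, F (e x) = f x := fun x => by rw [hFdef]; simp
    have hGcomp : ∀ x, G (e x) = g x := fun x => by rw [hGdef]; simp
    have hvols : (volume : Measure (ℝ × (Fin n → ℝ))) = Measure.prod volume volume :=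
      Measure.volume_eq_prod ℝ (Fin n → ℝ)
    have hFtot : ∫⁻ p, F p ∂(Measure.prod volume volume) = 1 := by
      rw [← hvols, ← hepres.lintegral_comp hFm]
      simp_rw [hFcomp]
      exact hfint
    have hGtot : ∫⁻ p, G p ∂(Measure.prod volume volume) = 1 := by
      rw [← hvols, ← hepres.lintegral_comp hGm]
      simp_rw [hGcomp]
      exact hgint
    have hFm1 : Measurable fun a => ∫⁻ t, F (t, a) := by
      apply Measurable.lintegral_prod_right' (f := fun q : (Fin n → ℝ) × ℝ => F (q.2, q.1))
      exact hFm.comp (measurable_snd.prodMk measurable_fst)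
    have hGm1 : Measurable fun b => ∫⁻ t, G (t, b) := by
      apply Measurable.lintegral_prod_right' (f := fun q : (Fin n → ℝ) × ℝ => G (q.2, q.1))
      exact hGm.comp (measurable_snd.prodMk measurable_fst)
    have hFint1 : ∫⁻ a, (∫⁻ t, F (t, a)) ∂volume = 1 := by
      rw [← lintegral_prod_symm F hFm.aemeasurable]
      exact hFtot
    have hGint1 : ∫⁻ b, (∫⁻ t, G (t, b)) ∂volume = 1 := by
      rw [← lintegral_prod_symm G hGm.aemeasurable]
      exact hGtot
    have hF1pos : ∀ a, 0 < ∫⁻ t, F (t, a) := by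
      intro a
      have hd : Measurable fun t : ℝ => F (t, a) :=
        hFm.comp (measurable_id.prodMk measurable_const)
      rw [lintegral_pos_iff_support hd]
      have hsupp : (Function.support fun t => F (t, a)) = Set.univ := by
        ext t; simpa [Function.mem_support] using (hfpos (e.symm (t, a))).ne'
      rw [hsupp]
      simp
    have hG1pos : ∀ b, 0 < ∫⁻ t, G (t, b) := by
      intro b
      have hd : Measurable fun t : ℝ => G (t, b) :=
        hGm.comp (measurable_id.prodMk measurable_const)
      rw [lintegral_pos_iff_support hd]
      have hsupp : (Function.support fun t => G (t, b)) = Set.univ := by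
        ext t; simpa [Function.mem_support] using (hgpos (e.symm (t, b))).ne'
      rw [hsupp]
      simp
    obtain ⟨T0, hT0m, hT0tri, hT0sec, hT0map⟩ := IH (fun a => ∫⁻ t, F (t, a))
      (fun b => ∫⁻ t, G (t, b)) hFm1 hGm1 hF1pos hG1pos hFint1 hGint1
    obtain ⟨S, hSmeas, hSmono, hSmap⟩ := KRaux2.step_core volume F G hFm hGm
      (fun p => hfpos _) (fun p => hgpos _) (hFint1 ▸ ENNReal.one_ne_top) (hGint1 ▸ ENNReal.one_ne_top)
      T0 hT0m hT0map
    set T : (Fin (n+1) → ℝ) → (Fin (n+1) → ℝ) :=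
      fun x => e.symm (S (e x).2 (e x).1, T0 (e x).2) with hTdef
    have hTm : Measurable T := by
      apply e.symm.measurable.comp
      exact ((hSmeas.prodMk (hT0m.comp measurable_snd)).comp e.measurable)
    have he_fst : ∀ x : Fin (n+1) → ℝ, (e x).1 = x (Fin.last n) := by
      intro x
      rfl
    have he_snd : ∀ x : Fin (n+1) → ℝ, (e x).2 = fun j => x (Fin.castSucc j) := by
      intro x
      funext j
      show x ((Fin.last n).succAbove j) = _
      rw [Fin.succAbove_last_apply]
    have hesymm : ∀ (u : ℝ) (c : Fin n → ℝ), e.symm (u, c) = Fin.snoc c u := by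
      intro u c
      rw [hedef]
      simp [MeasurableEquiv.piFinSuccAbove_symm_apply, Fin.insertNthEquiv, Fin.insertNth_last']
    have hT_cast : ∀ (x : Fin (n+1) → ℝ) (j : Fin n),
        T x (Fin.castSucc j) = T0 (fun i => x (Fin.castSucc i)) j := by
      intro x j
      show (e.symm (S (e x).2 (e x).1, T0 (e x).2)) (Fin.castSucc j) = _
      rw [hesymm, Fin.snoc_castSucc, he_snd]
    have hT_last : ∀ x : Fin (n+1) → ℝ,
        T x (Fin.last n) = S (fun i => x (Fin.castSucc i)) (x (Fin.last n)) := by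
      intro x
      show (e.symm (S (e x).2 (e x).1, T0 (e x).2)) (Fin.last n) = _
      rw [hesymm, Fin.snoc_last, he_snd, he_fst]
    have hfront_update_last : ∀ (x : Fin (n+1) → ℝ) (t : ℝ) (i : Fin n),
        Function.update x (Fin.last n) t (Fin.castSucc i) = x (Fin.castSucc i) := by
      intro x t i
      exact Function.update_of_ne (Fin.castSucc_lt_last i).ne _ _
    have hfront_update_cast : ∀ (x : Fin (n+1) → ℝ) (j : Fin n) (t : ℝ),
        (fun i => Function.update x (Fin.castSucc j) t (Fin.castSucc i))
          = Function.update (fun i => x (Fin.castSucc i)) j t := by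
      intro x j t
      funext i
      rcases eq_or_ne i j with rfl | hij
      · rw [Function.update_self, Function.update_self]
      · rw [Function.update_of_ne hij, Function.update_of_ne (fun hc => hij
          (Fin.castSucc_injective n hc))]
    refine ⟨T, hTm, ?_, ?_, ?_⟩
    · -- lower triangular
      intro k x y hxy
      induction k using Fin.lastCases with
      | last =>
        have hxej : x = y := funext fun i => hxy i (Fin.le_last i)
        rw [hxej]
      | cast j =>
        rw [hT_cast, hT_cast]
        apply hT0tri j
        intro i hij
        exact hxy (Fin.castSucc i) (Fin.castSucc_le_castSucc_iff.2 hij)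
    · -- strictly increasing sections
      intro k x
      induction k using Fin.lastCases with
      | last =>
        have heq : (fun t : ℝ => T (Function.update x (Fin.last n) t) (Fin.last n))
            = fun t => S (fun i => x (Fin.castSucc i)) t := by
          funext t
          rw [hT_last]
          rw [Function.update_self]
          congr 1
          funext i
          exact hfront_update_last x t i
        rw [heq]
        exact hSmono _
      | cast j =>
        have heq : (fun t : ℝ => T (Function.update x (Fin.castSucc j) t) (Fin.castSucc j))
            = fun t => T0 (Function.update (fun i => x (Fin.castSucc i)) j t) j := by
          funext t
          rw [hT_cast, hfront_update_cast]
        rw [heq]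
        exact hT0sec j _
    · -- pushforward
      have hwd : volume.withDensity f = volume.withDensity (fun x => F (e x)) := by
        congr 1
        funext x
        rw [hFcomp]
      have hstep1 : Measure.map e (volume.withDensity f)
          = (Measure.prod volume volume).withDensity F := by
        rw [hwd, map_equiv_withDensity e volume hFm, hepres.map_eq, hvols]
      have hstep2 : Measure.map (fun p : ℝ × (Fin n → ℝ) => (S p.2 p.1, T0 p.2))
          (Measure.map e (volume.withDensity f))
          = (Measure.prod volume volume).withDensity G := by
        rw [hstep1, hSmap]
      have hstep3 : Measure.map e.symm ((Measure.prod volume volume).withDensity G)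
          = volume.withDensity g := by
        have hGsy : (fun p : ℝ × (Fin n → ℝ) => g (e.symm p)) = G := rfl
        rw [← hGsy]
        rw [map_equiv_withDensity e.symm (Measure.prod volume volume) hg]
        rw [← hvols, (hepres.symm e).map_eq]
      have hΘm : Measurable fun p : ℝ × (Fin n → ℝ) => (S p.2 p.1, T0 p.2) :=
        hSmeas.prodMk (hT0m.comp measurable_snd)
      have hcomp1 : Measure.map T (volume.withDensity f)
          = Measure.map (⇑e.symm ∘ ((fun p : ℝ × (Fin n → ℝ) => (S p.2 p.1, T0 p.2)) ∘ ⇑e))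
            (volume.withDensity f) := rfl
      rw [hcomp1, ← Measure.map_map e.symm.measurable (hΘm.comp e.measurable),
        ← Measure.map_map hΘm e.measurable, hstep2, hstep3]

end KRaux3


/-- Existence of the Knothe–Rosenblatt rearrangement: if `μ` and `ν` are Borel
probability measures on `ℝⁿ`, absolutely continuous with respect to Lebesgue
measure with strictly positive densities, then there is a measurable lower
triangular map `T` whose diagonal sections are strictly increasing and which
pushes forward `μ` to `ν`. -/
theorem knothe_rosenblatt_exists {n : ℕ}
    (μ ν : Measure (Fin n → ℝ)) [IsProbabilityMeasure μ] [IsProbabilityMeasure ν]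
    (f g : (Fin n → ℝ) → ℝ≥0∞) (hf : Measurable f) (hg : Measurable g)
    (hfpos : ∀ x, 0 < f x) (hgpos : ∀ x, 0 < g x)
    (hμ : μ = volume.withDensity f) (hν : ν = volume.withDensity g) :
    ∃ T : (Fin n → ℝ) → (Fin n → ℝ),
      Measurable T ∧ LowerTriangular T ∧
      (∀ (k : Fin n) (x : Fin n → ℝ),
        StrictMono (fun t : ℝ => T (Function.update x k t) k)) ∧
      Measure.map T μ = ν := by
  have hfint : ∫⁻ x, f x = 1 := by
    have h := measure_univ (μ := μ)
    rw [hμ, withDensity_apply _ MeasurableSet.univ, setLIntegral_univ] at h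
    exact h
  have hgint : ∫⁻ x, g x = 1 := by
    have h := measure_univ (μ := ν)
    rw [hν, withDensity_apply _ MeasurableSet.univ, setLIntegral_univ] at h
    exact h
  obtain ⟨T, hTm, hTtri, hTsec, hTmap⟩ := KRaux3.KR n f g hf hg hfpos hgpos hfint hgint
  exact ⟨T, hTm, hTtri, hTsec, by rw [hμ, hν, hTmap]⟩
end

section
/- Let μ and ν be Borel probability measures on ℝⁿ that are absolutely continuous with respect to Lebesgue measure with strictly positive densities. If T and T̃ are two measurable lower triangular maps ℝⁿ → ℝⁿ such that for every k and every fixed (x_1,…,x_{k−1}) the sections x_k ↦ T^k(x_1,…,x_k) and x_k ↦ T̃^k(x_1,…,x_k) are strictly increasing, and both T♯μ = ν and T̃♯μ = ν, then T = T̃ μ-almost everywhere. -/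
open MeasureTheory
open scoped ENNReal

private lemma kr_mono_lt {n : ℕ} {T : (Fin n → ℝ) → (Fin n → ℝ)}
    (hTtri : LowerTriangular T)
    (hTmono : ∀ (k : Fin n) (x : Fin n → ℝ),
      StrictMono (fun t : ℝ => T (Function.update x k t) k))
    {j : Fin n} {x y : Fin n → ℝ} (hagree : ∀ i, i < j → x i = y i) (hlt : x j < y j) :
    T x j < T y j := by
  have h1 : T x j = T (Function.update y j (x j)) j := by
    apply hTtri j
    intro i hi
    rcases lt_or_eq_of_le hi with h | h
    · rw [Function.update_of_ne (ne_of_lt h)]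
      exact hagree i h
    · subst h; simp
  have h2 : T (Function.update y j (x j)) j < T (Function.update y j (y j)) j :=
    hTmono j y hlt
  rw [Function.update_eq_self] at h2
  rw [h1]; exact h2

set_option maxHeartbeats 1000000 in
private lemma kr_step {n : ℕ}
    (μ : Measure (Fin n → ℝ)) [IsProbabilityMeasure μ]
    (f : (Fin n → ℝ) → ℝ≥0∞) (hf : Measurable f)
    (hfpos : ∀ x, 0 < f x)
    (hμ : μ = volume.withDensity f)
    (T T' : (Fin n → ℝ) → (Fin n → ℝ))
    (hTmeas : Measurable T) (hT'meas : Measurable T')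
    (hTtri : LowerTriangular T) (hT'tri : LowerTriangular T')
    (hTmono : ∀ (k : Fin n) (x : Fin n → ℝ),
      StrictMono (fun t : ℝ => T (Function.update x k t) k))
    (hT'mono : ∀ (k : Fin n) (x : Fin n → ℝ),
      StrictMono (fun t : ℝ => T' (Function.update x k t) k))
    (hpush : Measure.map T μ = Measure.map T' μ)
    (k : Fin n)
    (hind : ∀ᵐ x ∂μ, ∀ j, j < k → T x j = T' x j) :
    ∀ᵐ x ∂μ, T x k = T' x k := by
  classical
  set p : Fin n → Prop := fun i => i < k with hp
  set e := MeasurableEquiv.piEquivPiSubtypeProd (fun _ : Fin n => ℝ) p with he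
  -- U := {i // p i} → ℝ, V := {i // ¬ p i} → ℝ
  set glue : ({i // p i} → ℝ) → ({i // ¬ p i} → ℝ) → (Fin n → ℝ) :=
    fun u v => e.symm (u, v) with hgluedef
  have hglue : ∀ (u : {i // p i} → ℝ) (v : {i // ¬ p i} → ℝ) (i : Fin n),
      glue u v i = if h : p i then u ⟨i, h⟩ else v ⟨i, h⟩ := by
    intro u v i
    simp [hgluedef, he, MeasurableEquiv.piEquivPiSubtypeProd, Equiv.piEquivPiSubtypeProd]
  have hgluemeas : Measurable fun uv : ({i // p i} → ℝ) × ({i // ¬ p i} → ℝ) =>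
      glue uv.1 uv.2 := by
    simpa [hgluedef] using e.symm.measurable
  have mp : MeasurePreserving e volume volume :=
    MeasureTheory.volume_preserving_piEquivPiSubtypeProd (fun _ : Fin n => ℝ) p
  have hlint : ∀ (h : (Fin n → ℝ) → ℝ≥0∞), Measurable h →
      ∫⁻ x, h x = ∫⁻ u, ∫⁻ v, h (glue u v) := by
    intro h hh
    calc ∫⁻ x, h x = ∫⁻ x, (h ∘ e.symm) (e x) := by simp
      _ = ∫⁻ y, (h ∘ e.symm) y := mp.lintegral_comp (hh.comp e.symm.measurable)
      _ = ∫⁻ u, ∫⁻ v, h (glue u v) := by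
          rw [Measure.volume_eq_prod, lintegral_prod _ ((hh.comp e.symm.measurable)).aemeasurable]
          rfl
  set projU : (Fin n → ℝ) → ({i // p i} → ℝ) := fun x i => x i.1 with hprojU
  have hprojUmeas : Measurable projU :=
    measurable_pi_lambda _ (fun i => measurable_pi_apply i.1)
  have hgp : ∀ u v, projU (glue u v) = u := by
    intro u v; funext i
    simp [hprojU, hglue u v i.1, i.2]
  have hknp : ¬ p k := by simp [hp]
  set kV : {i // ¬ p i} := ⟨k, hknp⟩ with hkV
  -- base point and diagonal sections
  set bp : ({i // p i} → ℝ) → (Fin n → ℝ) := fun u => glue u 0 with hbp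
  have hbpmeas : Measurable bp := by
    have : Measurable fun u : {i // p i} → ℝ => (u, (0 : {i // ¬ p i} → ℝ)) :=
      measurable_id.prodMk measurable_const
    exact hgluemeas.comp this
  set tau : ({i // p i} → ℝ) → ℝ → ℝ := fun u t => T (Function.update (bp u) k t) k with htau
  set tau' : ({i // p i} → ℝ) → ℝ → ℝ := fun u t => T' (Function.update (bp u) k t) k with htau'
  have hsec : ∀ (TT : (Fin n → ℝ) → (Fin n → ℝ)), LowerTriangular TT →
      ∀ u v, TT (glue u v) k = TT (Function.update (bp u) k (v kV)) k := by
    intro TT hTT u v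
    apply hTT k
    intro i hi
    rcases lt_or_eq_of_le hi with h | h
    · have hpi : p i := h
      rw [Function.update_of_ne (ne_of_lt h)]
      simp [hglue, hpi, hbp]
    · subst h
      rw [Function.update_self]
      simp [hglue, hknp, hkV]
  -- truncations
  set Ttr : (Fin n → ℝ) → ({i // p i} → ℝ) := fun x i => T x i.1 with hTtr
  set Ttr' : (Fin n → ℝ) → ({i // p i} → ℝ) := fun x i => T' x i.1 with hTtr'
  set R : ({i // p i} → ℝ) → ({i // p i} → ℝ) := fun u => Ttr (bp u) with hR
  have hTtrR : ∀ x, Ttr x = R (projU x) := by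
    intro x; funext i
    show T x i.1 = T (bp (projU x)) i.1
    apply hTtri i.1
    intro m hm
    have hpm : p m := lt_of_le_of_lt hm i.2
    simp [hbp, hglue, hpm, hprojU]
  have hRmeas : Measurable R := by
    apply measurable_pi_lambda
    intro i
    exact (measurable_pi_apply i.1).comp (hTmeas.comp hbpmeas)
  have hRinj : Function.Injective R := by
    intro u u' huu'
    by_contra hne
    have hex : {i : {i // p i} | u i ≠ u' i}.Nonempty := by
      rcases Function.ne_iff.1 hne with ⟨i, hi⟩
      exact ⟨i, hi⟩
    set s : Finset {i // p i} := Finset.univ.filter (fun i => u i ≠ u' i) with hs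
    have hsne : s.Nonempty := by
      rcases hex with ⟨i, hi⟩
      exact ⟨i, by simp only [hs, Finset.mem_filter, Finset.mem_univ, true_and]; exact hi⟩
    set j := s.min' hsne with hj
    have hjmem : u j ≠ u' j := by
      have := s.min'_mem hsne
      simp [hs] at this
      exact this
    have hbelow : ∀ m : Fin n, m < j.1 → bp u m = bp u' m := by
      intro m hm
      by_cases hpm : p m
      · have : u ⟨m, hpm⟩ = u' ⟨m, hpm⟩ := by
          by_contra hmm
          have hmem : (⟨m, hpm⟩ : {i // p i}) ∈ s := by simp [hs, hmm]
          have := s.min'_le _ hmem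
          rw [← hj] at this
          exact absurd (lt_of_lt_of_le hm (by exact_mod_cast this : j.1 ≤ m)) (lt_irrefl _)
        simp [hbp, hglue, hpm, this]
      · simp [hbp, hglue, hpm]
    have hval : ∀ w, bp w j.1 = w j := by
      intro w; simp [hbp, hglue, j.2]
    have hRj : T (bp u) j.1 = T (bp u') j.1 := by
      have := congrFun huu' j
      exact this
    rcases lt_trichotomy (u j) (u' j) with h | h | h
    · have : T (bp u) j.1 < T (bp u') j.1 :=
        kr_mono_lt hTtri hTmono hbelow (by rw [hval, hval]; exact h)
      exact absurd hRj (ne_of_lt this)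
    · exact hjmem h
    · have : T (bp u') j.1 < T (bp u) j.1 :=
        kr_mono_lt hTtri hTmono (fun m hm => (hbelow m hm).symm) (by rw [hval, hval]; exact h)
      exact absurd hRj.symm (ne_of_lt this)
  have hemb : MeasurableEmbedding R := hRmeas.measurableEmbedding hRinj
  have hTk : Measurable fun x => T x k := (measurable_pi_apply k).comp hTmeas
  have hT'k : Measurable fun x => T' x k := (measurable_pi_apply k).comp hT'meas
  have hmuint : ∀ (S : Set (Fin n → ℝ)), MeasurableSet S → μ S = ∫⁻ x, S.indicator f x := by
    intro S hS
    rw [hμ, withDensity_apply _ hS, ← lintegral_indicator hS]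
  have main : ∀ q : ℚ, ∀ᵐ x ∂μ, (T x k ≤ (q : ℝ) ↔ T' x k ≤ (q : ℝ)) := by
    intro q
    set A : Set (Fin n → ℝ) := {x | T x k ≤ (q : ℝ)} with hA
    set A' : Set (Fin n → ℝ) := {x | T' x k ≤ (q : ℝ)} with hA'
    have hAmeas : MeasurableSet A := measurableSet_le hTk measurable_const
    have hA'meas : MeasurableSet A' := measurableSet_le hT'k measurable_const
    -- Step B : key measure identity
    have stepB : ∀ C : Set ({i // p i} → ℝ), MeasurableSet C →
        μ (projU ⁻¹' C ∩ A) = μ (projU ⁻¹' C ∩ A') := by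
      intro C hC
      set B := R '' C with hB
      have hBmeas : MeasurableSet B := hemb.measurableSet_image.2 hC
      set W : Set (Fin n → ℝ) := projU ⁻¹' B ∩ {w | w k ≤ (q : ℝ)} with hW
      have hWmeas : MeasurableSet W :=
        (hprojUmeas hBmeas).inter (measurableSet_le (measurable_pi_apply k) measurable_const)
      have hmapeq : μ (T ⁻¹' W) = μ (T' ⁻¹' W) := by
        have h1 := congrArg (fun m : Measure (Fin n → ℝ) => m W) hpush
        simpa [Measure.map_apply hTmeas hWmeas, Measure.map_apply hT'meas hWmeas] using h1
      have hmemT : ∀ x, projU (T x) = R (projU x) := by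
        intro x; exact hTtrR x
      have hTW : T ⁻¹' W = projU ⁻¹' C ∩ A := by
        ext x
        simp only [Set.mem_preimage, Set.mem_inter_iff, hW, Set.mem_setOf_eq, hA]
        rw [hmemT x, hRinj.mem_set_image]
      have hT'W : μ (T' ⁻¹' W) = μ (projU ⁻¹' C ∩ A') := by
        apply measure_congr
        filter_upwards [hind] with x hx
        have hTtr'x : Ttr' x = Ttr x := funext fun i => (hx i.1 i.2).symm
        have hmem' : projU (T' x) = R (projU x) := by
          show Ttr' x = R (projU x)
          rw [hTtr'x]; exact hTtrR x
        show (x ∈ T' ⁻¹' W) = (x ∈ projU ⁻¹' C ∩ A')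
        simp only [Set.mem_preimage, Set.mem_inter_iff, hW, Set.mem_setOf_eq, hA']
        rw [hmem' , hRinj.mem_set_image]
      rw [← hTW, hmapeq, hT'W]
    -- Step C : Fubini representation
    have hrepr : ∀ (AA : Set (Fin n → ℝ)), MeasurableSet AA →
        ∀ C : Set ({i // p i} → ℝ), MeasurableSet C →
        μ (projU ⁻¹' C ∩ AA) = ∫⁻ u in C, ∫⁻ v, AA.indicator f (glue u v) := by
      intro AA hAA C hC
      have hSmeas : MeasurableSet (projU ⁻¹' C ∩ AA) := (hprojUmeas hC).inter hAA
      rw [hmuint _ hSmeas]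
      set G : (Fin n → ℝ) → ℝ≥0∞ := fun x => if projU x ∈ C then AA.indicator f x else 0
        with hG
      have hGeq : (projU ⁻¹' C ∩ AA).indicator f = G := by
        funext x
        by_cases h1 : projU x ∈ C <;> by_cases h2 : x ∈ AA <;>
          simp [hG, Set.indicator_apply, h1, h2]
      have hGmeas : Measurable G := Measurable.ite (hprojUmeas hC) (hf.indicator hAA)
        measurable_const
      rw [hGeq, hlint G hGmeas, ← lintegral_indicator hC]
      apply lintegral_congr; intro u
      by_cases hu : u ∈ C
      · simp only [hG, hgp, hu, if_true, Set.indicator_of_mem]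
      · simp only [hG, hgp, hu, if_false, Set.indicator_of_notMem, not_false_iff,
          lintegral_zero]
    set a : ({i // p i} → ℝ) → ℝ≥0∞ := fun u => ∫⁻ v, A.indicator f (glue u v) with ha
    set a' : ({i // p i} → ℝ) → ℝ≥0∞ := fun u => ∫⁻ v, A'.indicator f (glue u v) with ha'
    have hameas : Measurable a := by
      have h0 : Measurable fun y : ({i // p i} → ℝ) × ({i // ¬ p i} → ℝ) =>
          A.indicator f (glue y.1 y.2) := (hf.indicator hAmeas).comp hgluemeas
      exact h0.lintegral_prod_right'
    have ha'meas : Measurable a' := by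
      have h0 : Measurable fun y : ({i // p i} → ℝ) × ({i // ¬ p i} → ℝ) =>
          A'.indicator f (glue y.1 y.2) := (hf.indicator hA'meas).comp hgluemeas
      exact h0.lintegral_prod_right'
    have hsetint : ∀ C : Set ({i // p i} → ℝ), MeasurableSet C →
        ∫⁻ u in C, a u = ∫⁻ u in C, a' u := by
      intro C hC
      rw [ha, ha', ← hrepr A hAmeas C hC, ← hrepr A' hA'meas C hC]
      exact stepB C hC
    have haa' : a =ᵐ[volume] a' :=
      ae_eq_of_forall_setLIntegral_eq_of_sigmaFinite hameas ha'meas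
        (fun s hs _ => hsetint s hs)
    have hafin : ∫⁻ u, a u ≠ ∞ := by
      have h0 : ∫⁻ u, a u = μ A := by
        have := hrepr A hAmeas Set.univ MeasurableSet.univ
        simpa [Measure.restrict_univ] using this.symm
      rw [h0]; exact (measure_lt_top μ A).ne
    have ha'fin : ∫⁻ u, a' u ≠ ∞ := by
      have h0 : ∫⁻ u, a' u = μ A' := by
        have := hrepr A' hA'meas Set.univ MeasurableSet.univ
        simpa [Measure.restrict_univ] using this.symm
      rw [h0]; exact (measure_lt_top μ A').ne
    -- Step D : sections comparison
    have hgv : ∀ u : {i // p i} → ℝ, Measurable fun v : {i // ¬ p i} → ℝ => glue u v :=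
      fun u => hgluemeas.comp (measurable_const.prodMk measurable_id)
    have hstepD : ∀ᵐ u : ({i // p i} → ℝ),
        volume {v : {i // ¬ p i} → ℝ | ¬ ((glue u v ∈ A) ↔ (glue u v ∈ A'))} = 0 := by
      filter_upwards [haa', ae_lt_top hameas hafin, ae_lt_top ha'meas ha'fin]
        with u h1 h2 h3
      set J : Set ({i // ¬ p i} → ℝ) := {v | glue u v ∈ A} with hJ
      set J' : Set ({i // ¬ p i} → ℝ) := {v | glue u v ∈ A'} with hJ'
      have hJmeas : MeasurableSet J := (hgv u) hAmeas
      have hJ'meas : MeasurableSet J' := (hgv u) hA'meas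
      have hmemJ : ∀ v, v ∈ J ↔ tau u (v kV) ≤ (q : ℝ) := by
        intro v
        show T (glue u v) k ≤ (q : ℝ) ↔ _
        rw [hsec T hTtri u v]
      have hmemJ' : ∀ v, v ∈ J' ↔ tau' u (v kV) ≤ (q : ℝ) := by
        intro v
        show T' (glue u v) k ≤ (q : ℝ) ↔ _
        rw [hsec T' hT'tri u v]
      have hmonoτ : Monotone (tau u) := (hTmono k (bp u)).monotone
      have hmonoτ' : Monotone (tau' u) := (hT'mono k (bp u)).monotone
      have hnest : J ⊆ J' ∨ J' ⊆ J := by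
        by_contra hcon
        push_neg at hcon
        obtain ⟨v1, hv1J, hv1J'⟩ := Set.not_subset.1 hcon.1
        obtain ⟨v2, hv2J', hv2J⟩ := Set.not_subset.1 hcon.2
        rcases le_total (v1 kV) (v2 kV) with h | h
        · exact hv1J' ((hmemJ' v1).2 (le_trans (hmonoτ' h) ((hmemJ' v2).1 hv2J')))
        · exact hv2J ((hmemJ v2).2 (le_trans (hmonoτ h) ((hmemJ v1).1 hv1J)))
      have hkey : ∀ s s' : Set ({i // ¬ p i} → ℝ), MeasurableSet s → MeasurableSet s' →
          s ⊆ s' → (∫⁻ v in s, f (glue u v)) = (∫⁻ v in s', f (glue u v)) →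
          (∫⁻ v in s', f (glue u v)) ≠ ∞ → volume (s' \ s) = 0 := by
        intro s s' hs hs' hsub hint hfin
        have hWe : s ∪ (s' \ s) = s' := Set.union_diff_cancel hsub
        have hun : (∫⁻ v in s' , f (glue u v)) =
            (∫⁻ v in s, f (glue u v)) + ∫⁻ v in s' \ s, f (glue u v) := by
          have h5 := lintegral_union (μ := volume) (f := fun v => f (glue u v))
            (hs'.diff hs) (Set.disjoint_sdiff_right (s := s) (t := s'))
          rwa [hWe] at h5
        have hdiff0 : (∫⁻ v in s' \ s, f (glue u v)) = 0 := by
          have h4 : (∫⁻ v in s', f (glue u v)) + 0 =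
              (∫⁻ v in s', f (glue u v)) + ∫⁻ v in s' \ s, f (glue u v) := by
            rw [add_zero]
            calc (∫⁻ v in s', f (glue u v))
                = (∫⁻ v in s, f (glue u v)) + ∫⁻ v in s' \ s, f (glue u v) := hun
              _ = _ := by rw [hint]
          exact ((ENNReal.add_right_inj hfin).1 h4).symm
        have hae0 : (fun v => f (glue u v)) =ᵐ[volume.restrict (s' \ s)] 0 :=
          (lintegral_eq_zero_iff (hf.comp (hgv u))).1 hdiff0
        have hFalse : ∀ᵐ v ∂(volume.restrict (s' \ s)), False :=
          hae0.mono fun v hv => (hfpos (glue u v)).ne' hv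
        have h0 : volume.restrict (s' \ s) Set.univ = 0 := by
          have := ae_iff.1 hFalse
          simpa using this
        simpa [Measure.restrict_apply_univ] using h0
      have haJ : a u = ∫⁻ v in J, f (glue u v) := by
        rw [ha, ← lintegral_indicator hJmeas]
        apply lintegral_congr; intro v
        by_cases hv : v ∈ J
        · rw [Set.indicator_of_mem hv, Set.indicator_of_mem (show glue u v ∈ A from hv)]
        · rw [Set.indicator_of_notMem hv,
            Set.indicator_of_notMem (show glue u v ∉ A from hv)]
      have ha'J' : a' u = ∫⁻ v in J', f (glue u v) := by
        rw [ha', ← lintegral_indicator hJ'meas]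
        apply lintegral_congr; intro v
        by_cases hv : v ∈ J'
        · rw [Set.indicator_of_mem hv, Set.indicator_of_mem (show glue u v ∈ A' from hv)]
        · rw [Set.indicator_of_notMem hv,
            Set.indicator_of_notMem (show glue u v ∉ A' from hv)]
      rcases hnest with hss | hss
      · have h5 := hkey J J' hJmeas hJ'meas hss
          (by rw [← haJ, ← ha'J']; exact h1) (by rw [← ha'J']; exact h3.ne)
        have hset : {v | ¬ ((glue u v ∈ A) ↔ (glue u v ∈ A'))} = J' \ J := by
          ext v
          have := @hss v
          simp only [Set.mem_setOf_eq, Set.mem_diff, hJ, hJ']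
          simp only [hJ, hJ', Set.mem_setOf_eq] at this ⊢
          tauto
        rw [hset]; exact h5
      · have h5 := hkey J' J hJ'meas hJmeas hss
          (by rw [← haJ, ← ha'J']; exact h1.symm) (by rw [← haJ]; exact h2.ne)
        have hset : {v | ¬ ((glue u v ∈ A) ↔ (glue u v ∈ A'))} = J \ J' := by
          ext v
          have := @hss v
          simp only [Set.mem_setOf_eq, Set.mem_diff, hJ, hJ']
          simp only [hJ, hJ', Set.mem_setOf_eq] at this ⊢
          tauto
        rw [hset]; exact h5
    -- Step E : conclude μ-null
    set N : Set (Fin n → ℝ) := {x | ¬ (x ∈ A ↔ x ∈ A')} with hN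
    have hNeq : N = (A \ A') ∪ (A' \ A) := by
      ext x; simp only [hN, Set.mem_setOf_eq, Set.mem_union, Set.mem_diff]; tauto
    have hNmeas : MeasurableSet N := by
      rw [hNeq]; exact (hAmeas.diff hA'meas).union (hA'meas.diff hAmeas)
    have hμN : μ N = 0 := by
      rw [hmuint N hNmeas, hlint _ (hf.indicator hNmeas)]
      have hz : ∀ᵐ u : ({i // p i} → ℝ), (∫⁻ v, N.indicator f (glue u v)) = 0 := by
        filter_upwards [hstepD] with u hu
        have hsecmeas : MeasurableSet {v | glue u v ∈ N} := (hgv u) hNmeas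
        have heq2 : (fun v => N.indicator f (glue u v)) =
            fun v => ({v | glue u v ∈ N}).indicator (fun v => f (glue u v)) v := by
          funext v
          by_cases hv : glue u v ∈ N <;> simp [Set.indicator_apply, hv]
        rw [heq2, lintegral_indicator hsecmeas]
        exact setLIntegral_measure_zero _ _ hu
      rw [lintegral_congr_ae hz, lintegral_zero]
    exact ae_iff.2 hμN
  have hall : ∀ᵐ x ∂μ, ∀ q : ℚ, (T x k ≤ (q:ℝ) ↔ T' x k ≤ (q:ℝ)) := ae_all_iff.2 main
  filter_upwards [hall] with x hx
  by_contra hne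
  rcases lt_or_gt_of_ne hne with h | h
  · obtain ⟨q, hq1, hq2⟩ := exists_rat_btwn h
    exact absurd ((hx q).1 hq1.le) (not_le.2 hq2)
  · obtain ⟨q, hq1, hq2⟩ := exists_rat_btwn h
    exact absurd ((hx q).2 hq1.le) (not_le.2 hq2)

/-- Uniqueness (μ-a.e.) of the Knothe–Rosenblatt rearrangement: two measurable
lower triangular maps with strictly increasing diagonal sections pushing `μ`
forward to `ν` agree `μ`-almost everywhere. -/
theorem knothe_rosenblatt_unique {n : ℕ}
    (μ ν : Measure (Fin n → ℝ)) [IsProbabilityMeasure μ] [IsProbabilityMeasure ν]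
    (f g : (Fin n → ℝ) → ℝ≥0∞) (hf : Measurable f) (hg : Measurable g)
    (hfpos : ∀ x, 0 < f x) (hgpos : ∀ x, 0 < g x)
    (hμ : μ = volume.withDensity f) (hν : ν = volume.withDensity g)
    (T T' : (Fin n → ℝ) → (Fin n → ℝ))
    (hTmeas : Measurable T) (hT'meas : Measurable T')
    (hTtri : LowerTriangular T) (hT'tri : LowerTriangular T')
    (hTmono : ∀ (k : Fin n) (x : Fin n → ℝ),
      StrictMono (fun t : ℝ => T (Function.update x k t) k))
    (hT'mono : ∀ (k : Fin n) (x : Fin n → ℝ),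
      StrictMono (fun t : ℝ => T' (Function.update x k t) k))
    (hTpush : Measure.map T μ = ν) (hT'push : Measure.map T' μ = ν) :
    T =ᵐ[μ] T' := by
  have hpush : Measure.map T μ = Measure.map T' μ := by rw [hTpush, hT'push]
  have hcoord : ∀ m : ℕ, ∀ k : Fin n, (k : ℕ) = m → ∀ᵐ x ∂μ, T x k = T' x k := by
    intro m
    induction m using Nat.strong_induction_on with
    | _ m IH =>
      intro k hk
      apply kr_step μ f hf hfpos hμ T T' hTmeas hT'meas hTtri hT'tri hTmono hT'mono hpush k
      rw [ae_all_iff]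
      intro j
      by_cases hj : j < k
      · have := IH j.1 (by rw [← hk]; exact_mod_cast hj) j rfl
        exact this.mono fun x hx _ => hx
      · filter_upwards with x h
        exact absurd h hj
  have hall : ∀ᵐ x ∂μ, ∀ k : Fin n, T x k = T' x k :=
    ae_all_iff.2 fun k => hcoord k.1 k rfl
  filter_upwards [hall] with x hx
  funext k
  exact hx k
end

section
/- (Conditional sampling lemma) Let μ_X and μ_Θ be Borel probability measures on ℝᵐ and ℝᵏ respectively, and let T(x,θ) = (T_X(x), T_Θ(x,θ)) be a measurable block lower triangular map on ℝᵐ × ℝᵏ, where T_X : ℝᵐ → ℝᵐ is a bijection whose inverse is measurable and the map (d,θ) ↦ T_Θ(T_X⁻¹(d), θ) is measurable. Let ν := T♯(μ_X ⊗ μ_Θ) be the joint target measure on ℝᵐ × ℝᵏ, and let d ↦ ν(·|X=d) denote a regular conditional distribution of the second coordinate given the first (a disintegration kernel of ν). Then for ν-first-marginal-almost every d ∈ ℝᵐ, the map T_d : θ ↦ T_Θ(T_X⁻¹(d), θ) pushes forward μ_Θ to the conditional: (T_d)♯μ_Θ = ν(·|X=d). -/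
open MeasureTheory ProbabilityTheory

/-- Conditional sampling lemma: if `T(x,θ) = (T_X x, T_Θ x θ)` is a measurable
block lower triangular map, `T_X` is a bijection with measurable inverse, and
`ν = T♯(μ_X ⊗ μ_Θ)`, then for `ν_X`-a.e. `d` the map `θ ↦ T_Θ (T_X⁻¹ d) θ`
pushes `μ_Θ` forward to the regular conditional distribution `ν(·|X = d)`. -/
theorem conditional_sampling {m k : ℕ}
    (μX : Measure (Fin m → ℝ)) (μΘ : Measure (Fin k → ℝ))
    [IsProbabilityMeasure μX] [IsProbabilityMeasure μΘ]
    (TX : (Fin m → ℝ) → (Fin m → ℝ))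
    (TΘ : (Fin m → ℝ) → (Fin k → ℝ) → (Fin k → ℝ))
    (hT : Measurable (fun p : (Fin m → ℝ) × (Fin k → ℝ) => (TX p.1, TΘ p.1 p.2)))
    (hTXbij : Function.Bijective TX)
    (hTXinv : Measurable (Function.invFun TX))
    (hcond : Measurable (fun p : (Fin m → ℝ) × (Fin k → ℝ) =>
      TΘ (Function.invFun TX p.1) p.2))
    (ν : Measure ((Fin m → ℝ) × (Fin k → ℝ)))
    (hν : ν = Measure.map (fun p : (Fin m → ℝ) × (Fin k → ℝ) =>
      (TX p.1, TΘ p.1 p.2)) (μX.prod μΘ))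
    (κ : Kernel (Fin m → ℝ) (Fin k → ℝ)) [IsMarkovKernel κ]
    (hκ : ∀ A B : Set _, MeasurableSet A → MeasurableSet B →
      ν (A ×ˢ B) = ∫⁻ d in A, κ d B ∂(ν.map Prod.fst)) :
    ∀ᵐ d ∂(ν.map Prod.fst),
      Measure.map (fun θ => TΘ (Function.invFun TX d) θ) μΘ = κ d := by
  classical
  subst hν
  set T : (Fin m → ℝ) × (Fin k → ℝ) → (Fin m → ℝ) × (Fin k → ℝ) :=
    fun p => (TX p.1, TΘ p.1 p.2) with hTdef
  set ρ : Measure ((Fin m → ℝ) × (Fin k → ℝ)) := (μX.prod μΘ).map T with hρdef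
  have hρprob : IsProbabilityMeasure ρ := Measure.isProbabilityMeasure_map hT.aemeasurable
  have hfst : ρ.map Prod.fst = ρ.fst := rfl
  -- the candidate kernel
  have hg : ∀ d, Measurable (fun θ => TΘ (Function.invFun TX d) θ) :=
    fun d => hcond.comp (measurable_prodMk_left)
  let η : Kernel (Fin m → ℝ) (Fin k → ℝ) :=
    ⟨fun d => μΘ.map (fun θ => TΘ (Function.invFun TX d) θ), by
      refine Measure.measurable_of_measurable_coe _ (fun s hs => ?_)
      have heq : (fun d => (μΘ.map (fun θ => TΘ (Function.invFun TX d) θ)) s)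
          = fun d => μΘ ((fun θ => TΘ (Function.invFun TX d) θ) ⁻¹' s) := by
        funext d; exact Measure.map_apply (hg d) hs
      rw [heq]
      exact measurable_measure_prodMk_left (hcond hs)⟩
  have hη : ∀ d, η d = μΘ.map (fun θ => TΘ (Function.invFun TX d) θ) := fun _ => rfl
  have hηM : IsMarkovKernel η :=
    ⟨fun d => by rw [hη]; exact Measure.isProbabilityMeasure_map (hg d).aemeasurable⟩
  -- measurability of TX
  have hTX : Measurable TX := by
    have : Measurable fun x : Fin m → ℝ => (T (x, fun _ => 0)).1 :=
      (measurable_fst.comp hT).comp (measurable_id.prodMk measurable_const)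
    exact this
  have hleft : ∀ x, Function.invFun TX (TX x) = x :=
    Function.leftInverse_invFun hTXbij.1
  -- ρ.fst = map TX μX
  have hρfst : ρ.fst = μX.map TX := by
    rw [Measure.fst, hρdef, Measure.map_map measurable_fst hT]
    have : (Prod.fst ∘ T) = TX ∘ Prod.fst := rfl
    rw [this, ← Measure.map_map hTX measurable_fst, Measure.map_fst_prod]
    simp
  -- rectangle computation for η
  have hrect : ∀ A B : Set _, MeasurableSet A → MeasurableSet B →
      ρ (A ×ˢ B) = ∫⁻ d in A, η d B ∂ρ.fst := by
    intro A B hA hB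
    rw [hρdef, Measure.map_apply hT (hA.prod hB),
      Measure.prod_apply (hT (hA.prod hB))]
    have hsec : ∀ x : Fin m → ℝ,
        (Prod.mk x ⁻¹' (T ⁻¹' (A ×ˢ B)))
          = if TX x ∈ A then (fun θ => TΘ x θ) ⁻¹' B else ∅ := by
      intro x
      by_cases hx : TX x ∈ A <;> simp [T, Set.preimage, hx]
    calc ∫⁻ x, μΘ (Prod.mk x ⁻¹' (T ⁻¹' (A ×ˢ B))) ∂μX
        = ∫⁻ x, (TX ⁻¹' A).indicator (fun x => μΘ ((fun θ => TΘ x θ) ⁻¹' B)) x ∂μX := by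
          refine lintegral_congr fun x => ?_
          rw [hsec x]
          by_cases hx : TX x ∈ A <;>
            simp [Set.indicator_apply, hx]
      _ = ∫⁻ x in TX ⁻¹' A, μΘ ((fun θ => TΘ x θ) ⁻¹' B) ∂μX := by
          rw [lintegral_indicator (hTX hA)]
      _ = ∫⁻ d in A, η d B ∂ρ.fst := by
          rw [hρfst]
          have hf : Measurable fun d => η d B := η.measurable_coe hB
          rw [setLIntegral_map hA hf hTX]
          refine lintegral_congr fun x => ?_
          rw [hη, Measure.map_apply (hg (TX x)) hB, hleft x]
  -- ρ = ρ.fst ⊗ₘ compProd for both kernels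
  have hext : ∀ (ξ : Kernel (Fin m → ℝ) (Fin k → ℝ)), IsMarkovKernel ξ →
      (∀ A B : Set _, MeasurableSet A → MeasurableSet B →
        ρ (A ×ˢ B) = ∫⁻ d in A, ξ d B ∂ρ.fst) → ρ = ρ.fst ⊗ₘ ξ := by
    intro ξ hξM hξ
    have hPM : IsProbabilityMeasure (ρ.fst ⊗ₘ ξ) := by infer_instance
    refine ext_of_generate_finite _ generateFrom_prod.symm isPiSystem_prod ?_ ?_
    · rintro s ⟨A, hA, B, hB, rfl⟩
      simp only [Set.mem_setOf_eq] at hA hB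
      rw [hξ A B hA hB, Measure.compProd_apply_prod hA hB]
    · simp [measure_univ]
  have hcompη : ρ = ρ.fst ⊗ₘ η := hext η hηM hrect
  have hcompκ : ρ = ρ.fst ⊗ₘ κ := hext κ inferInstance (by
    intro A B hA hB
    rw [← hfst]
    exact hκ A B hA hB)
  have h1 := eq_condKernel_of_measure_eq_compProd (ρ := ρ) η hcompη
  have h2 := eq_condKernel_of_measure_eq_compProd (ρ := ρ) κ hcompκ
  rw [hfst]
  filter_upwards [h1, h2] with d hd1 hd2
  rw [← hη, hd1, hd2]
end

section
/- Let η and π be strictly positive Borel probability densities on ℝⁿ with respect to Lebesgue measure, and let S : ℝⁿ → ℝⁿ be a C¹ diffeomorphism whose Jacobian determinant det∇S(x) is strictly positive for every x. If the function x ↦ log π(x) − log η(S(x)) − log det∇S(x) is integrable with respect to the measure π·Leb, then D_KL(S♯(π·Leb) ‖ η·Leb) = ∫_{ℝⁿ} ( log π(x) − log η(S(x)) − log det∇S(x) ) π(x) dx. -/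
open MeasureTheory
open scoped Classical ENNReal

/-- The Kullback–Leibler divergence: `∫ log (dμ/dν) dμ` when `μ ≪ ν`, and `+∞`
otherwise. -/
noncomputable def klDiv {α : Type*} [MeasurableSpace α] (μ ν : Measure α) : EReal :=
  if μ ≪ ν then ((∫ x, Real.log (μ.rnDeriv ν x).toReal ∂μ : ℝ) : EReal) else ⊤

lemma map_withDensity_comp_aux {α : Type*} [MeasurableSpace α] {μ : Measure α}
    {f : α → α} (hf : Measurable f) {g : α → ℝ≥0∞} (hg : Measurable g) :
    Measure.map f (μ.withDensity (g ∘ f)) = (Measure.map f μ).withDensity g := by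
  refine Measure.ext fun s hs => ?_
  rw [Measure.map_apply hf hs, withDensity_apply _ (hf hs), withDensity_apply _ hs,
    setLIntegral_map hs hg hf]
  rfl

/-- For strictly positive probability densities `η`, `π` and a `C¹`
diffeomorphism `S` with everywhere positive Jacobian determinant,
`D_KL(S♯(π·Leb) ‖ η·Leb) = ∫ (log π − log η∘S − log det∇S) dπ·Leb`. -/
theorem klDiv_pushforward_target_eq_integral {n : ℕ}
    (η π : (Fin n → ℝ) → ℝ) (hηm : Measurable η) (hπm : Measurable π)
    (hηpos : ∀ x, 0 < η x) (hπpos : ∀ x, 0 < π x)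
    (hηprob : ∫ x, η x = 1) (hπprob : ∫ x, π x = 1)
    (S : (Fin n → ℝ) → (Fin n → ℝ)) (hSbij : Function.Bijective S)
    (hS : ContDiff ℝ 1 S) (hSinv : ContDiff ℝ 1 (Function.invFun S))
    (hdet : ∀ x, 0 < (fderiv ℝ S x).det)
    (hint : Integrable
      (fun x => Real.log (π x) - Real.log (η (S x)) - Real.log ((fderiv ℝ S x).det))
      (volume.withDensity (fun x => ENNReal.ofReal (π x)))) :
    klDiv (Measure.map S (volume.withDensity (fun x => ENNReal.ofReal (π x))))
        (volume.withDensity (fun x => ENNReal.ofReal (η x)))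
      = ((∫ x, (Real.log (π x) - Real.log (η (S x)) - Real.log ((fderiv ℝ S x).det))
          ∂(volume.withDensity (fun x => ENNReal.ofReal (π x))) : ℝ) : EReal) := by
  classical
  set invS := Function.invFun S with hinvS
  have hScont : Continuous S := hS.continuous
  have hSmeas : Measurable S := hScont.measurable
  have hinvcont : Continuous invS := hSinv.continuous
  have hinvmeas : Measurable invS := hinvcont.measurable
  have hleft : ∀ x, invS (S x) = x := fun x => Function.leftInverse_invFun hSbij.1 x
  have hdetcont : Continuous (fun x => (fderiv ℝ S x).det) :=
    ContinuousLinearMap.continuous_det.comp (hS.continuous_fderiv one_ne_zero)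
  have hdetmeas : Measurable (fun x => (fderiv ℝ S x).det) := hdetcont.measurable
  set μπ := volume.withDensity (fun x => ENNReal.ofReal (π x)) with hμπ
  set ν := volume.withDensity (fun x => ENNReal.ofReal (η x)) with hν
  set ρ : (Fin n → ℝ) → ℝ≥0∞ :=
    fun y => ENNReal.ofReal (π (invS y) / ((fderiv ℝ S (invS y)).det * η y)) with hρ
  set g : (Fin n → ℝ) → ℝ≥0∞ :=
    fun y => ENNReal.ofReal (π (invS y) / (fderiv ℝ S (invS y)).det) with hg
  have hρmeas : Measurable ρ :=
    ((hπm.comp hinvmeas).div ((hdetmeas.comp hinvmeas).mul hηm)).ennreal_ofReal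
  have hgmeas : Measurable g :=
    ((hπm.comp hinvmeas).div (hdetmeas.comp hinvmeas)).ennreal_ofReal
  -- measurable embedding
  let e : (Fin n → ℝ) ≃ₜ (Fin n → ℝ) :=
    { toFun := S
      invFun := invS
      left_inv := Function.leftInverse_invFun hSbij.1
      right_inv := Function.rightInverse_invFun hSbij.2
      continuous_toFun := hScont
      continuous_invFun := hinvcont }
  have hemb : MeasurableEmbedding S := e.toMeasurableEquiv.measurableEmbedding
  -- change of variables for the Jacobian density
  have hvol : Measure.map S (volume.withDensity fun x => ENNReal.ofReal |(fderiv ℝ S x).det|)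
      = volume := by
    have h := map_withDensity_abs_det_fderiv_eq_addHaar (μ := volume) MeasurableSet.univ.nullMeasurableSet
      (fun x _ => (hS.differentiable one_ne_zero x).hasFDerivAt.hasFDerivWithinAt)
      hSbij.injective.injOn
    rw [Measure.restrict_univ] at h
    rw [h, Set.image_univ, hSbij.surjective.range_eq, Measure.restrict_univ]
  -- factor the density π through the Jacobian
  have hfact : (fun x => ENNReal.ofReal (π x))
      = (fun x => ENNReal.ofReal |(fderiv ℝ S x).det|) * (g ∘ S) := by
    funext x
    have hd := hdet x
    show ENNReal.ofReal (π x) = ENNReal.ofReal |(fderiv ℝ S x).det| * g (S x)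
    rw [hg]
    simp only [hleft x]
    rw [abs_of_pos hd, ← ENNReal.ofReal_mul hd.le, mul_comm,
      div_mul_cancel₀ _ (ne_of_gt hd)]
  have hmapg : Measure.map S μπ = volume.withDensity g := by
    rw [hμπ, hfact,
      withDensity_mul _ hdetmeas.abs.ennreal_ofReal (hgmeas.comp hSmeas),
      map_withDensity_comp_aux hSmeas hgmeas, hvol]
  -- rewrite as a density against ν
  have hηρ : (fun y => ENNReal.ofReal (η y)) * ρ = g := by
    funext y
    have hηy := hηpos y
    have hd := hdet (invS y)
    show ENNReal.ofReal (η y) * ρ y = g y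
    rw [hρ, hg, ← ENNReal.ofReal_mul hηy.le]
    congr 1
    field_simp
  have hmap : Measure.map S μπ = ν.withDensity ρ := by
    rw [hmapg, hν, ← withDensity_mul _ hηm.ennreal_ofReal hρmeas, hηρ]
  have hac : Measure.map S μπ ≪ ν := hmap ▸ withDensity_absolutelyContinuous ν ρ
  -- ν is a finite measure
  have hηint : Integrable η volume := integrable_of_integral_eq_one hηprob
  haveI : IsFiniteMeasure ν := by
    constructor
    rw [hν, withDensity_apply _ MeasurableSet.univ, Measure.restrict_univ,
      ← ofReal_integral_eq_lintegral_ofReal hηint (Filter.Eventually.of_forall fun x => (hηpos x).le),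
      hηprob]
    simp
  have hrn : (Measure.map S μπ).rnDeriv ν =ᵐ[ν] ρ := by
    rw [hmap]; exact Measure.rnDeriv_withDensity ν hρmeas
  rw [klDiv, if_pos hac]
  congr 1
  calc ∫ y, Real.log ((Measure.map S μπ).rnDeriv ν y).toReal ∂(Measure.map S μπ)
      = ∫ y, Real.log (ρ y).toReal ∂(Measure.map S μπ) := by
        refine integral_congr_ae ?_
        filter_upwards [hac.ae_eq hrn] with y hy
        rw [hy]
    _ = ∫ x, Real.log (ρ (S x)).toReal ∂μπ := hemb.integral_map _
    _ = ∫ x, (Real.log (π x) - Real.log (η (S x)) - Real.log ((fderiv ℝ S x).det)) ∂μπ := by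
        refine integral_congr_ae (Filter.Eventually.of_forall fun x => ?_)
        have hd := hdet x
        have hηx := hηpos (S x)
        have hπx := hπpos x
        rw [hρ]
        simp only [hleft x]
        rw [ENNReal.toReal_ofReal (div_nonneg hπx.le (mul_nonneg hd.le hηx.le)),
          Real.log_div (ne_of_gt hπx) (ne_of_gt (mul_pos hd hηx)),
          Real.log_mul (ne_of_gt hd) (ne_of_gt hηx)]
        ring
end

section
/- (Convexity of the sample-based objective) Let f : ℝⁿ → ℝ be a convex function (e.g., f = −log η for a log-concave reference density η), and fix points x_1,…,x_M ∈ ℝⁿ. For a map S : ℝⁿ → ℝⁿ that is differentiable at each x_i, define J(S) := Σ_{i=1}^{M} [ f(S(x_i)) − Σ_{k=1}^{n} log ∂_k S^k(x_i) ], where ∂_k S^k(x_i) is the partial derivative of the k-th component of S with respect to the k-th coordinate at x_i. If S_0 and S_1 are both differentiable at each x_i with ∂_k S_0^k(x_i) > 0 and ∂_k S_1^k(x_i) > 0 for all i and k, then for every t ∈ [0,1] the convex combination S_t := (1−t)S_0 + tS_1 also satisfies ∂_k S_t^k(x_i) > 0 for all i and k, and J(S_t) ≤ (1−t)J(S_0)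 + tJ(S_1). -/
/-- Convexity of the sample-based objective
`J(S) = Σ_i [ f(S(x_i)) − Σ_k log ∂_k S^k(x_i) ]`: along convex combinations
of maps with positive diagonal partials at the sample points, the diagonal
partials stay positive and `J` is convex. -/
theorem sample_objective_convex {n M : ℕ}
    (f : (Fin n → ℝ) → ℝ) (hf : ConvexOn ℝ Set.univ f)
    (x : Fin M → Fin n → ℝ)
    (S₀ S₁ : (Fin n → ℝ) → (Fin n → ℝ))
    (hS₀ : ∀ i, DifferentiableAt ℝ S₀ (x i))
    (hS₁ : ∀ i, DifferentiableAt ℝ S₁ (x i))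
    (hp₀ : ∀ (i : Fin M) (k : Fin n), 0 < fderiv ℝ S₀ (x i) (Pi.single k 1) k)
    (hp₁ : ∀ (i : Fin M) (k : Fin n), 0 < fderiv ℝ S₁ (x i) (Pi.single k 1) k)
    (t : ℝ) (ht : t ∈ Set.Icc (0:ℝ) 1) :
    (∀ (i : Fin M) (k : Fin n),
      0 < fderiv ℝ (fun y => (1 - t) • S₀ y + t • S₁ y) (x i) (Pi.single k 1) k) ∧
    (∑ i : Fin M,
        (f ((1 - t) • S₀ (x i) + t • S₁ (x i)) -
          ∑ k : Fin n,
            Real.log (fderiv ℝ (fun y => (1 - t) • S₀ y + t • S₁ y) (x i)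
              (Pi.single k 1) k)))
      ≤ (1 - t) *
          (∑ i : Fin M,
            (f (S₀ (x i)) -
              ∑ k : Fin n, Real.log (fderiv ℝ S₀ (x i) (Pi.single k 1) k)))
        + t *
          (∑ i : Fin M,
            (f (S₁ (x i)) -
              ∑ k : Fin n, Real.log (fderiv ℝ S₁ (x i) (Pi.single k 1) k))) := by
  obtain ⟨ht0, ht1⟩ := ht
  have h1t : (0:ℝ) ≤ 1 - t := by linarith
  have hderiv : ∀ i k,
      fderiv ℝ (fun y => (1 - t) • S₀ y + t • S₁ y) (x i) (Pi.single k 1) k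
      = (1 - t) * fderiv ℝ S₀ (x i) (Pi.single k 1) k
        + t * fderiv ℝ S₁ (x i) (Pi.single k 1) k := by
    intro i k
    have : fderiv ℝ (fun y => (1 - t) • S₀ y + t • S₁ y) (x i)
        = (1 - t) • fderiv ℝ S₀ (x i) + t • fderiv ℝ S₁ (x i) := by
      rw [fderiv_fun_add ((hS₀ i).fun_const_smul _) ((hS₁ i).fun_const_smul _),
        fderiv_fun_const_smul (hS₀ i), fderiv_fun_const_smul (hS₁ i)]
    rw [this]
    simp [Pi.add_apply, Pi.smul_apply, smul_eq_mul]
  have hpos : ∀ (i : Fin M) (k : Fin n),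
      0 < fderiv ℝ (fun y => (1 - t) • S₀ y + t • S₁ y) (x i) (Pi.single k 1) k := by
    intro i k
    rw [hderiv i k]
    rcases eq_or_lt_of_le ht0 with h | h
    · simp [← h, hp₀ i k]
    · have h1 := mul_nonneg h1t (hp₀ i k).le
      have h2 := mul_pos h (hp₁ i k)
      linarith
  refine ⟨hpos, ?_⟩
  rw [Finset.mul_sum, Finset.mul_sum, ← Finset.sum_add_distrib]
  apply Finset.sum_le_sum
  intro i _
  have hflog : f ((1 - t) • S₀ (x i) + t • S₁ (x i))
      ≤ (1 - t) * f (S₀ (x i)) + t * f (S₁ (x i)) := by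
    have := hf.2 (Set.mem_univ (S₀ (x i))) (Set.mem_univ (S₁ (x i))) h1t ht0
      (by ring)
    simpa [smul_eq_mul] using this
  have hlog : ∀ k : Fin n,
      (1 - t) * Real.log (fderiv ℝ S₀ (x i) (Pi.single k 1) k)
        + t * Real.log (fderiv ℝ S₁ (x i) (Pi.single k 1) k)
      ≤ Real.log
          (fderiv ℝ (fun y => (1 - t) • S₀ y + t • S₁ y) (x i) (Pi.single k 1) k) := by
    intro k
    rw [hderiv i k]
    have := strictConcaveOn_log_Ioi.concaveOn.2 (Set.mem_Ioi.2 (hp₀ i k))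
      (Set.mem_Ioi.2 (hp₁ i k)) h1t ht0 (by ring)
    simpa [smul_eq_mul] using this
  have hlogsum :
      (1 - t) * ∑ k : Fin n, Real.log (fderiv ℝ S₀ (x i) (Pi.single k 1) k)
        + t * ∑ k : Fin n, Real.log (fderiv ℝ S₁ (x i) (Pi.single k 1) k)
      ≤ ∑ k : Fin n, Real.log
          (fderiv ℝ (fun y => (1 - t) • S₀ y + t • S₁ y) (x i) (Pi.single k 1) k) := by
    rw [Finset.mul_sum, Finset.mul_sum, ← Finset.sum_add_distrib]
    exact Finset.sum_le_sum fun k _ => hlog k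
  nlinarith [hflog, hlogsum]
end

section
/- (Lexicographic monotonicity of triangular maps) Let T : ℝⁿ → ℝⁿ be lower triangular. Then T is strictly increasing with respect to the lexicographic order on ℝⁿ (i.e., x <_lex y implies T(x) <_lex T(y) for all x, y ∈ ℝⁿ) if and only if for every k and every fixed (x_1,…,x_{k−1}), the section x_k ↦ T^k(x_1,…,x_{k−1},x_k) is strictly increasing on ℝ. -/
/-- The (strict) lexicographic order on `ℝⁿ`: `x <_lex y` iff at the first
coordinate where `x` and `y` differ, `y` is larger. -/
def LexLT {n : ℕ} (x y : Fin n → ℝ) : Prop :=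
  ∃ k : Fin n, (∀ i < k, x i = y i) ∧ x k < y k

lemma lexLT_trichotomy {n : ℕ} {x y : Fin n → ℝ} (h : x ≠ y) : LexLT x y ∨ LexLT y x := by
  classical
  have hs : (Finset.univ.filter (fun i => x i ≠ y i)).Nonempty := by
    obtain ⟨i, hi⟩ : ∃ i, x i ≠ y i := by
      by_contra hc; push_neg at hc; exact h (funext hc)
    exact ⟨i, by simp [hi]⟩
  set k := (Finset.univ.filter (fun i => x i ≠ y i)).min' hs with hkdef
  have hk : x k ≠ y k := by
    have := Finset.min'_mem _ hs
    simpa using this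
  have hlt : ∀ i < k, x i = y i := by
    intro i hi
    by_contra hc
    exact absurd (Finset.min'_le _ i (by simp [hc])) (not_le.mpr hi)
  rcases hk.lt_or_gt with h' | h'
  · exact Or.inl ⟨k, hlt, h'⟩
  · exact Or.inr ⟨k, fun i hi => (hlt i hi).symm, h'⟩

lemma lexLT_head_le {m : ℕ} {a b : Fin (m+1) → ℝ} (h : LexLT a b) : a 0 ≤ b 0 := by
  obtain ⟨k, hk, hlt⟩ := h
  rcases eq_or_ne k 0 with rfl | hne
  · exact hlt.le
  · exact (hk 0 (Fin.pos_of_ne_zero hne)).le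

lemma lexLT_cons_of_head {m : ℕ} {u v : ℝ} (w w' : Fin m → ℝ) (h : u < v) :
    LexLT (Fin.cons u w) (Fin.cons v w') :=
  ⟨0, fun i hi => absurd hi (Fin.not_lt_zero i), by simpa using h⟩

lemma lexLT_cons_of_tail {m : ℕ} (u : ℝ) {w w' : Fin m → ℝ} (h : LexLT w w') :
    LexLT (Fin.cons u w) (Fin.cons u w') := by
  obtain ⟨k, hk, hlt⟩ := h
  refine ⟨k.succ, ?_, by simpa using hlt⟩
  intro i hi
  rcases Fin.eq_zero_or_eq_succ i with rfl | ⟨j, rfl⟩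
  · simp
  · simpa using hk j (by rwa [Fin.succ_lt_succ_iff] at hi)

lemma lexLT_tail {m : ℕ} {a b : Fin (m+1) → ℝ} (h : LexLT a b) (h0 : a 0 = b 0) :
    LexLT (Fin.tail a) (Fin.tail b) := by
  obtain ⟨k, hk, hlt⟩ := h
  have hkne : k ≠ 0 := by rintro rfl; exact absurd h0 hlt.ne
  obtain ⟨j, rfl⟩ := Fin.eq_succ_of_ne_zero hkne
  refine ⟨j, fun i hi => ?_, hlt⟩
  exact hk i.succ (Fin.succ_lt_succ_iff.mpr hi)

/-- There is no strictly lex-monotone map from `ℝ^(m+1)` to `ℝ^m`. -/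
lemma no_lex_mono_drop : ∀ m : ℕ, ∀ f : (Fin (m+1) → ℝ) → (Fin m → ℝ),
    ¬ (∀ w w', LexLT w w' → LexLT (f w) (f w')) := by
  intro m
  induction m with
  | zero =>
    intro f hf
    obtain ⟨k, -, -⟩ := hf (fun _ => 0) (fun _ => 1)
      ⟨0, fun i hi => absurd hi (Fin.not_lt_zero i), by norm_num⟩
    exact k.elim0
  | succ m ih =>
    intro f hf
    by_cases hA : ∃ u : ℝ, ∀ w w' : Fin (m+1) → ℝ, f (Fin.cons u w) 0 = f (Fin.cons u w') 0
    · obtain ⟨u, hu⟩ := hA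
      exact ih (fun w => Fin.tail (f (Fin.cons u w)))
        (fun w w' hw => lexLT_tail (hf _ _ (lexLT_cons_of_tail u hw)) (hu w w'))
    · push_neg at hA
      have key : ∀ u : ℝ, ∃ a b : Fin (m+1) → ℝ,
          f (Fin.cons u a) 0 < f (Fin.cons u b) 0 := by
        intro u
        obtain ⟨w, w', hne⟩ := hA u
        have hww : w ≠ w' := by rintro rfl; exact hne rfl
        rcases lexLT_trichotomy hww with h | h
        · exact ⟨w, w', lt_of_le_of_ne (lexLT_head_le (hf _ _ (lexLT_cons_of_tail u h))) hne⟩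
        · exact ⟨w', w, lt_of_le_of_ne (lexLT_head_le (hf _ _ (lexLT_cons_of_tail u h))) hne.symm⟩
      choose a b hab using key
      have hq : ∀ u : ℝ, ∃ q : ℚ, f (Fin.cons u (a u)) 0 < (q:ℝ) ∧
          (q:ℝ) < f (Fin.cons u (b u)) 0 := fun u => exists_rat_btwn (hab u)
      choose Q hQ1 hQ2 using hq
      have hinj : Function.Injective Q := by
        have hmono : StrictMono Q := by
          intro u v huv
          have h2 : f (Fin.cons u (b u)) 0 ≤ f (Fin.cons v (a v)) 0 :=
            lexLT_head_le (hf _ _ (lexLT_cons_of_head _ _ huv))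
          have : (Q u : ℝ) < (Q v : ℝ) := (hQ2 u).trans (h2.trans_lt (hQ1 v))
          exact_mod_cast this
        exact hmono.injective
      exact (not_countable (α := ℝ)) hinj.countable

/-- Lexicographic monotonicity of triangular maps: a lower triangular map is
strictly increasing for the lexicographic order if and only if all of its
diagonal sections `x_k ↦ T^k(x_1,…,x_{k−1},x_k)` are strictly increasing. -/
theorem lowerTriangular_lex_strictMono_iff {n : ℕ}
    (T : (Fin n → ℝ) → (Fin n → ℝ)) (hTtri : LowerTriangular T) :
    (∀ x y : Fin n → ℝ, LexLT x y → LexLT (T x) (T y)) ↔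
    (∀ (k : Fin n) (x : Fin n → ℝ),
      StrictMono (fun t : ℝ => T (Function.update x k t) k)) := by
  constructor
  · intro hmono k x
    set F : ℝ → ℝ := fun t => T (Function.update x k t) k with hFdef
    have hlow : ∀ (u v : Fin n → ℝ), (∀ i : Fin n, i.val < k.val → u i = v i) →
        ∀ i : Fin n, i.val < k.val → T u i = T v i := by
      intro u v huv i hi
      exact hTtri i u v (fun l hl => huv l (lt_of_le_of_lt (hl : l.val ≤ i.val) hi))
    have hstep : ∀ s t : ℝ, s < t → F s ≤ F t := by
      intro s t hst
      have hlex : LexLT (Function.update x k s) (Function.update x k t) :=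
        ⟨k, fun i hi => by
          rw [Function.update_of_ne hi.ne, Function.update_of_ne hi.ne],
          by simpa using hst⟩
      obtain ⟨j, hj, hjlt⟩ := hmono _ _ hlex
      have hcomp : ∀ i : Fin n, i.val < k.val →
          T (Function.update x k s) i = T (Function.update x k t) i := by
        refine hlow _ _ (fun l hl => ?_) 
        have hne : l ≠ k := fun he => by simp [he] at hl
        rw [Function.update_of_ne hne, Function.update_of_ne hne]
      rcases lt_trichotomy j k with h | h | h
      · exact absurd (hcomp j h) hjlt.ne
      · subst h; exact hjlt.le
      · exact (hj k h).le
    have hFmono : Monotone F := by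
      intro s t h
      rcases h.lt_or_eq with h' | h'
      · exact hstep s t h'
      · rw [h']
    intro s t hst
    by_contra hle
    push_neg at hle
    have heq : F s = F t := le_antisymm (hstep s t hst) hle
    obtain ⟨m, hm⟩ : ∃ m, n = k.val + 1 + m := ⟨n - k.val - 1, by have := k.isLt; omega⟩
    have hpi : (0:ℝ) < Real.pi := Real.pi_pos
    set σ : ℝ → ℝ := fun r => (s + t) / 2 + (t - s) / Real.pi * Real.arctan r with hσdef
    have hσmono : StrictMono σ := by
      intro r r' hr
      have h1 : Real.arctan r < Real.arctan r' := Real.arctan_strictMono hr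
      have h2 : (0:ℝ) < (t - s) / Real.pi := div_pos (by linarith) hpi
      have h3 := mul_lt_mul_of_pos_left h1 h2
      simp only [hσdef]
      linarith
    have hσmem : ∀ r, s < σ r ∧ σ r < t := by
      intro r
      have hpine : Real.pi ≠ 0 := ne_of_gt hpi
      have h1 : Real.arctan r < Real.pi / 2 := Real.arctan_lt_pi_div_two r
      have h2 : -(Real.pi / 2) < Real.arctan r := Real.neg_pi_div_two_lt_arctan r
      have h3 : (0:ℝ) < (t - s) / Real.pi := div_pos (by linarith) hpi
      have e1 := mul_lt_mul_of_pos_left h1 h3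
      have e2 := mul_lt_mul_of_pos_left h2 h3
      have he : (t - s) / Real.pi * (Real.pi / 2) = (t - s) / 2 := by
        field_simp
      have he2 : (t - s) / Real.pi * -(Real.pi / 2) = -((t - s) / 2) := by
        field_simp
      rw [he] at e1
      rw [he2] at e2
      constructor
      · simp only [hσdef]; linarith
      · simp only [hσdef]; linarith
    have hFσ : ∀ r, F (σ r) = F s :=
      fun r => le_antisymm (heq ▸ hFmono (hσmem r).2.le) (hFmono (hσmem r).1.le)
    -- the embedded map
    set ins : (Fin (m+1) → ℝ) → Fin n → ℝ := fun w i =>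
      if i.val < k.val then x i
      else if i.val = k.val then σ (w 0)
      else w ⟨i.val - k.val, by have := i.isLt; omega⟩ with hinsdef
    have hinslow : ∀ w : Fin (m+1) → ℝ, ∀ i : Fin n, i.val < k.val → ins w i = x i := by
      intro w i hi; simp only [hinsdef]; rw [if_pos hi]
    have hinsk : ∀ w : Fin (m+1) → ℝ, ins w k = σ (w 0) := by
      intro w; simp only [hinsdef]; rw [if_neg (lt_irrefl _)]; simp
    have hinshigh : ∀ w : Fin (m+1) → ℝ, ∀ i : Fin n, (h1 : k.val < i.val) →
        ins w i = w ⟨i.val - k.val, by have := i.isLt; omega⟩ := by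
      intro w i hi
      have h1 : ¬ i.val < k.val := by omega
      have h2 : ¬ i.val = k.val := by omega
      simp only [hinsdef]; rw [if_neg h1, if_neg h2]
    -- T of ins agrees with F on coordinate k
    have hTinsk : ∀ w : Fin (m+1) → ℝ, T (ins w) k = F s := by
      intro w
      have h1 : T (ins w) k = F (σ (w 0)) := by
        refine hTtri k (ins w) (Function.update x k (σ (w 0))) (fun l hl => ?_)
        rcases lt_or_eq_of_le hl with h | h
        · rw [Function.update_of_ne (Fin.ne_of_lt h), hinslow w l h]
        · subst h; rw [Function.update_self, hinsk]
      rw [h1, hFσ]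
    have hTinslow : ∀ w w' : Fin (m+1) → ℝ, ∀ i : Fin n, i.val < k.val →
        T (ins w) i = T (ins w') i := by
      intro w w' i hi
      exact hlow _ _ (fun l hl => by rw [hinslow w l hl, hinslow w' l hl]) i hi
    refine no_lex_mono_drop m
      (fun w j => T (ins w) ⟨k.val + 1 + j.val, by have := j.isLt; omega⟩) ?_
    rintro w w' ⟨κ, hκ, hκlt⟩
    have hins : LexLT (ins w) (ins w') := by
      refine ⟨⟨k.val + κ.val, by have := κ.isLt; omega⟩, ?_, ?_⟩
      · intro i hi
        have hi' : i.val < k.val + κ.val := hi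
        rcases lt_trichotomy i.val k.val with h1 | h1 | h1
        · rw [hinslow w i h1, hinslow w' i h1]
        · have hik : i = k := Fin.ext h1
          subst hik
          have h0 : (0 : Fin (m+1)) < κ := by
            have : 0 < κ.val := by omega
            exact this
          rw [hinsk, hinsk, hκ 0 h0]
        · rw [hinshigh w i h1, hinshigh w' i h1]
          have hlt2 : (⟨i.val - k.val, by have := i.isLt; omega⟩ : Fin (m+1)) < κ := by
            have : i.val - k.val < κ.val := by omega
            exact this
          rw [hκ _ hlt2]
      · rcases Nat.eq_zero_or_pos κ.val with h0 | h0
        · have hκ0 : κ = 0 := Fin.ext h0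
          have hcoord : (⟨k.val + κ.val, by have := κ.isLt; omega⟩ : Fin n) = k := by
            apply Fin.ext; simp [h0]
          rw [hcoord, hinsk, hinsk]
          exact hσmono (hκ0 ▸ hκlt)
        · have hgt : k.val < (⟨k.val + κ.val, by have := κ.isLt; omega⟩ : Fin n).val := by
            simpa using h0
          rw [hinshigh w _ hgt, hinshigh w' _ hgt]
          have hmk : (⟨(⟨k.val + κ.val, by have := κ.isLt; omega⟩ : Fin n).val - k.val,
              by have := κ.isLt; omega⟩ : Fin (m+1)) = κ := by
            apply Fin.ext; simp
          rw [hmk]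
          exact hκlt
    obtain ⟨j₀, hj₀, hj₀lt⟩ := hmono _ _ hins
    have hj₀k : k.val < j₀.val := by
      rcases lt_trichotomy j₀.val k.val with h | h | h
      · exact absurd (hTinslow w w' j₀ h) hj₀lt.ne
      · have : j₀ = k := Fin.ext h
        subst this
        rw [hTinsk w, hTinsk w'] at hj₀lt
        exact absurd rfl hj₀lt.ne
      · exact h
    refine ⟨⟨j₀.val - k.val - 1, by have := j₀.isLt; omega⟩, ?_, ?_⟩
    · intro i hi
      have hi' : i.val < j₀.val - k.val - 1 := hi
      exact hj₀ ⟨k.val + 1 + i.val, by have := i.isLt; omega⟩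
        (show k.val + 1 + i.val < j₀.val by omega)
    · have hcoord : (⟨k.val + 1 + (j₀.val - k.val - 1), by have := j₀.isLt; omega⟩ : Fin n)
        = j₀ := Fin.ext (by simp; omega)
      show T (ins w) _ < T (ins w') _
      rw [hcoord]
      exact hj₀lt
  · intro hsec x y hxy
    obtain ⟨κ, hκ, hκlt⟩ := hxy
    refine ⟨κ, fun i hi => hTtri i x y (fun l hl => hκ l (lt_of_le_of_lt hl hi)), ?_⟩
    have h1 : T x κ = T (Function.update x κ (x κ)) κ := by
      rw [Function.update_eq_self]
    have h2 : T y κ = T (Function.update x κ (y κ)) κ := by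
      refine hTtri κ y _ (fun l hl => ?_)
      rcases lt_or_eq_of_le hl with h | h
      · rw [Function.update_of_ne (Fin.ne_of_lt h)]
        exact (hκ l h).symm
      · subst h; rw [Function.update_self]
    rw [h1, h2]
    exact hsec κ x hκlt
end
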